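/- arXiv:2111.04772 — 8 statements merged into one kernel-verified Lean document; each statement's English description precedes it below -/
import Mathlib

section
/- Let μ be a probability vector on ℕ₀ with μ₀ ∈ (0,1) and consider the Boolean percolation model on the directed graph ℤ (edges (x, x+1)). Then V_μ(ℤ) = ℤ almost surely if and only if μ has infinite expectation, i.e. ∑_{n≥0} n·μ_n = ∞. -/
open MeasureTheory ProbabilityTheory Filter
open scoped ENNReal Topology

/-- Weierstrass product inequality. -/
lemma aux_weier (t : ℕ → ℝ) (ht0 : ∀ k, 0 ≤ t k) (ht1 : ∀ k, t k ≤ 1) (s : Finset ℕ) :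
    1 - ∑ k ∈ s, t k ≤ ∏ k ∈ s, (1 - t k) := by
  classical
  induction s using Finset.induction_on with
  | empty => simp
  | @insert a s ha ih =>
    rw [Finset.sum_insert ha, Finset.prod_insert ha]
    have hS : (0:ℝ) ≤ ∑ k ∈ s, t k := Finset.sum_nonneg fun k _ => ht0 k
    have h1 : (1 - t a) * (1 - ∑ k ∈ s, t k) ≤ (1 - t a) * ∏ k ∈ s, (1 - t k) :=
      mul_le_mul_of_nonneg_left ih (by linarith [ht1 a])
    nlinarith [ht0 a, ht1 a]

/-- shifted tail sums as an ite-sum. -/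
lemma aux_tail (g : ℕ → ℝ≥0∞) (k : ℕ) :
    ∑' j : ℕ, g (j + (k + 1)) = ∑' n : ℕ, if k < n then g n else 0 := by
  have hinj : Function.Injective (fun j : ℕ => j + (k + 1)) := add_left_injective (k + 1)
  have hsupp : Function.support (fun n : ℕ => if k < n then g n else 0)
      ⊆ Set.range (fun j : ℕ => j + (k + 1)) := by
    intro n hn
    simp only [Function.mem_support, ne_eq, ite_eq_right_iff, not_forall] at hn
    obtain ⟨hkn, -⟩ := hn
    exact ⟨n - (k + 1), show n - (k + 1) + (k + 1) = n by omega⟩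
  have h := hinj.tsum_eq (f := fun n : ℕ => if k < n then g n else 0) hsupp
  rw [← h]
  refine tsum_congr fun j => ?_
  have hj : k < j + (k + 1) := by omega
  simp [hj]

/-- The key double-sum identity. -/
lemma aux_key (g : ℕ → ℝ≥0∞) :
    ∑' (k : ℕ) (j : ℕ), g (j + (k + 1)) = ∑' n : ℕ, (n : ℝ≥0∞) * g n := by
  have h1 : ∀ k : ℕ, ∑' j : ℕ, g (j + (k + 1)) = ∑' n : ℕ, if k < n then g n else 0 :=
    aux_tail g
  calc ∑' (k : ℕ) (j : ℕ), g (j + (k + 1))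
      = ∑' (k : ℕ) (n : ℕ), if k < n then g n else 0 := tsum_congr h1
    _ = ∑' (n : ℕ) (k : ℕ), if k < n then g n else 0 := ENNReal.tsum_comm
    _ = ∑' n : ℕ, (n : ℝ≥0∞) * g n := by
        refine tsum_congr fun n => ?_
        rw [tsum_eq_sum (s := Finset.range n) (fun k hk => if_neg (by simpa using hk)),
          Finset.sum_congr rfl (fun k hk => if_pos (Finset.mem_range.mp hk)),
          Finset.sum_const, Finset.card_range, nsmul_eq_mul]

lemma aux_ofReal_prod (g : ℕ → ℝ) (h : ∀ k, 0 ≤ g k) (s : Finset ℕ) :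
    ENNReal.ofReal (∏ k ∈ s, g k) = ∏ k ∈ s, ENNReal.ofReal (g k) := by
  classical
  induction s using Finset.induction_on with
  | empty => simp
  | @insert a s ha ih =>
    rw [Finset.prod_insert ha, Finset.prod_insert ha, ENNReal.ofReal_mul (h a), ih]

/-- In the Boolean percolation model on the directed graph `ℤ`
(edges `(x, x+1)`), almost surely every vertex is covered iff `μ` has infinite
expectation, i.e. `∑ n, n * μ n = ∞`. -/
theorem boolean_percolation_Z_all_covered_iff_infinite_expectation
    (μ : ℕ → ℝ) (hμnonneg : ∀ n, 0 ≤ μ n) (hμsum : ∑' n, μ n = 1)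
    (hμ0pos : 0 < μ 0) (hμ0lt : μ 0 < 1)
    (Ω : Type*) [MeasurableSpace Ω] (P : Measure Ω) [IsProbabilityMeasure P]
    (Y : ℤ → Ω → ℕ) (hYmeas : ∀ x, Measurable (Y x))
    (hYindep : iIndepFun Y P)
    (hYdist : ∀ x k, P {ω | Y x ω = k} = ENNReal.ofReal (μ k)) :
    P {ω | ∀ m : ℤ, ∃ x : ℤ, x ≤ m ∧ m - x < (Y x ω : ℤ)} = 1 ↔
      ∑' n : ℕ, (n : ℝ≥0∞) * ENNReal.ofReal (μ n) = ⊤ := by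
  classical
  have hSummable : Summable μ := by
    by_contra h
    rw [tsum_eq_zero_of_not_summable h] at hμsum
    norm_num at hμsum
  set f : ℕ → ℝ := fun k => ∑ j ∈ Finset.range (k + 1), μ j with hf_def
  set t : ℕ → ℝ := fun k => ∑' j, μ (j + (k + 1)) with ht_def
  have htsummable : ∀ k : ℕ, Summable fun j => μ (j + (k + 1)) := fun k =>
    (summable_nat_add_iff (k + 1)).2 hSummable
  have hft : ∀ k, f k + t k = 1 := by
    intro k
    have h := Summable.sum_add_tsum_nat_add (f := μ) (k + 1) hSummable
    rw [hμsum] at h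
    exact h
  have htnn : ∀ k, 0 ≤ t k := fun k => tsum_nonneg fun j => hμnonneg _
  have hfnn : ∀ k, 0 ≤ f k := fun k => Finset.sum_nonneg fun j _ => hμnonneg j
  have hf_le_one : ∀ k, f k ≤ 1 := fun k => by have h1 := hft k; have h2 := htnn k; linarith
  have ht_le_one : ∀ k, t k ≤ 1 := fun k => by have h1 := hft k; have h2 := hfnn k; linarith
  have hμ0f : ∀ k, μ 0 ≤ f k := fun k =>
    Finset.single_le_sum (fun j _ => hμnonneg j) (Finset.mem_range.mpr (Nat.succ_pos k))
  -- Key identity: expectation equals sum of tails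
  have hkey : ∑' n : ℕ, (n : ℝ≥0∞) * ENNReal.ofReal (μ n) = ∑' k, ENNReal.ofReal (t k) := by
    rw [← aux_key fun n => ENNReal.ofReal (μ n)]
    refine tsum_congr fun k => ?_
    rw [ht_def]
    exact (ENNReal.ofReal_tsum_of_nonneg (fun j => hμnonneg _) (htsummable k)).symm
  -- probability of Iic events
  have hIic : ∀ (x : ℤ) (k : ℕ), P (Y x ⁻¹' Set.Iic k) = ENNReal.ofReal (f k) := by
    intro x k
    have hset : Y x ⁻¹' Set.Iic k = ⋃ j ∈ Finset.range (k + 1), Y x ⁻¹' {j} := by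
      ext ω
      simp [Nat.lt_succ_iff]
    have hdisj : (↑(Finset.range (k + 1)) : Set ℕ).PairwiseDisjoint fun j => Y x ⁻¹' {j} := by
      intro i _ j _ hij
      simp only [Function.onFun]
      refine Set.disjoint_left.mpr fun ω h1 h2 => hij ?_
      simp only [Set.mem_preimage, Set.mem_singleton_iff] at h1 h2
      rw [← h1, ← h2]
    rw [hset, measure_biUnion_finset hdisj fun j _ => hYmeas x (measurableSet_singleton j)]
    have hsingle : ∀ j : ℕ, P (Y x ⁻¹' {j}) = ENNReal.ofReal (μ j) := by
      intro j
      have : Y x ⁻¹' {j} = {ω | Y x ω = j} := by ext ω; simp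
      rw [this]; exact hYdist x j
    rw [Finset.sum_congr rfl fun j _ => hsingle j]
    exact (ENNReal.ofReal_sum_of_nonneg fun j _ => hμnonneg j).symm
  -- product formula via independence
  have hprod : ∀ (m : ℤ) (N : ℕ),
      P (⋂ k ∈ Finset.range N, Y (m - (k : ℤ)) ⁻¹' Set.Iic k)
        = ENNReal.ofReal (∏ k ∈ Finset.range N, f k) := by
    intro m N
    have hinj : Function.Injective fun k : ℕ => m - (k : ℤ) := by
      intro a b h
      simp only [sub_right_inj] at h
      exact_mod_cast h
    have hind := hYindep.measure_inter_preimage_eq_mul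
      ((Finset.range N).image fun k : ℕ => m - (k : ℤ))
      (sets := fun x : ℤ => Set.Iic (m - x).toNat) (fun i _ => measurableSet_Iic)
    rw [Finset.set_biInter_finset_image, Finset.prod_image
      (fun a _ b _ h => hinj h)] at hind
    have hsimp : ∀ k : ℕ, (m - (m - (k : ℤ))).toNat = k := by
      intro k; rw [sub_sub_cancel, Int.toNat_natCast]
    calc P (⋂ k ∈ Finset.range N, Y (m - (k : ℤ)) ⁻¹' Set.Iic k)
        = P (⋂ k ∈ Finset.range N, Y (m - (k : ℤ)) ⁻¹' Set.Iic (m - (m - (k:ℤ))).toNat) := by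
          congr 1
          refine Set.iInter₂_congr fun k _ => ?_
          rw [hsimp k]
      _ = ∏ k ∈ Finset.range N, P (Y (m - (k:ℤ)) ⁻¹' Set.Iic (m - (m - (k:ℤ))).toNat) := hind
      _ = ∏ k ∈ Finset.range N, ENNReal.ofReal (f k) := by
          refine Finset.prod_congr rfl fun k _ => ?_
          rw [hsimp k, hIic]
      _ = ENNReal.ofReal (∏ k ∈ Finset.range N, f k) := (aux_ofReal_prod f hfnn _).symm
  -- the bad events
  set Bad : ℤ → Set Ω := fun m => ⋂ k : ℕ, Y (m - (k : ℤ)) ⁻¹' Set.Iic k with hBad_def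
  have hBadMeas : ∀ m, MeasurableSet (Bad m) := fun m =>
    MeasurableSet.iInter fun k => hYmeas _ measurableSet_Iic
  have hgood : {ω | ∀ m : ℤ, ∃ x : ℤ, x ≤ m ∧ m - x < (Y x ω : ℤ)} = (⋃ m : ℤ, Bad m)ᶜ := by
    ext ω
    simp only [Set.mem_setOf_eq, Set.mem_compl_iff, Set.mem_iUnion, Set.mem_iInter,
      Set.mem_preimage, Set.mem_Iic, not_exists, hBad_def]
    constructor
    · intro h m hm
      obtain ⟨x, hx, hlt⟩ := h m
      have hk : ((m - x).toNat : ℤ) = m - x := Int.toNat_of_nonneg (by linarith)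
      have h1 := hm (m - x).toNat
      rw [show m - ((m - x).toNat : ℤ) = x by omega] at h1
      have h2 : (Y x ω : ℤ) ≤ ((m - x).toNat : ℤ) := by exact_mod_cast h1
      omega
    · intro h m
      have h1 := h m
      push_neg at h1
      obtain ⟨k, hk⟩ := h1
      refine ⟨m - (k : ℤ), by omega, ?_⟩
      have : ((k : ℤ)) < (Y (m - (k:ℤ)) ω : ℤ) := by exact_mod_cast hk
      omega
  rw [hgood, prob_compl_eq_one_iff (MeasurableSet.iUnion hBadMeas)]
  constructor
  · -- P (⋃ Bad) = 0 → infinite expectation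
    intro h0
    by_contra hS
    rw [hkey] at hS
    have hsumt : Summable t := by
      have h1 := ENNReal.summable_toReal hS
      exact h1.congr fun k => ENNReal.toReal_ofReal (htnn k)
    have htail : Tendsto (fun N => ∑' k, t (k + N)) atTop (𝓝 0) := tendsto_sum_nat_add t
    obtain ⟨N, hN⟩ := (htail.eventually (gt_mem_nhds (by norm_num : (0:ℝ) < 1/2))).exists
    set c : ℝ := μ 0 ^ N * (1 / 2) with hc
    have hcpos : 0 < c := by positivity
    have hlow : ∀ M, c ≤ ∏ k ∈ Finset.range M, f k := by
      intro M
      have hpowM : ∀ L, μ 0 ^ L ≤ ∏ k ∈ Finset.range L, f k := by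
        intro L
        calc μ 0 ^ L = ∏ _k ∈ Finset.range L, μ 0 := by
              rw [Finset.prod_const, Finset.card_range]
          _ ≤ ∏ k ∈ Finset.range L, f k :=
              Finset.prod_le_prod (fun k _ => le_of_lt hμ0pos) (fun k _ => hμ0f k)
      rcases le_or_gt M N with hMN | hNM
      · have h2 : μ 0 ^ N ≤ μ 0 ^ M :=
          pow_le_pow_of_le_one (le_of_lt hμ0pos) (le_of_lt hμ0lt) hMN
        have h3 : c ≤ μ 0 ^ N := by
          rw [hc]
          nlinarith [pow_nonneg (le_of_lt hμ0pos) N]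
        linarith [hpowM M]
      · have hsplit : (∏ k ∈ Finset.range N, f k) * ∏ k ∈ Finset.Ico N M, f k
            = ∏ k ∈ Finset.range M, f k :=
          Finset.prod_range_mul_prod_Ico f (le_of_lt hNM)
        have hsum_le : ∑ k ∈ Finset.Ico N M, t k ≤ ∑' k, t (k + N) := by
          rw [Finset.sum_Ico_eq_sum_range]
          have : ∀ i ∈ Finset.range (M - N), t (N + i) = t (i + N) := by
            intro i _; rw [add_comm]
          rw [Finset.sum_congr rfl this]
          exact Summable.sum_le_tsum (Finset.range (M - N)) (fun i _ => htnn _)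
            ((summable_nat_add_iff N).2 hsumt)
        have hIco : (1:ℝ)/2 ≤ ∏ k ∈ Finset.Ico N M, f k := by
          have hW := aux_weier t htnn ht_le_one (Finset.Ico N M)
          have heq : ∏ k ∈ Finset.Ico N M, (1 - t k) = ∏ k ∈ Finset.Ico N M, f k := by
            refine Finset.prod_congr rfl fun k _ => ?_
            have := hft k; linarith
          rw [heq] at hW
          linarith
        have hN' : μ 0 ^ N ≤ ∏ k ∈ Finset.range N, f k := hpowM N
        calc c = μ 0 ^ N * (1/2) := hc
          _ ≤ (∏ k ∈ Finset.range N, f k) * ∏ k ∈ Finset.Ico N M, f k := by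
              refine mul_le_mul hN' hIco (by norm_num) ?_
              exact Finset.prod_nonneg fun k _ => hfnn k
          _ = ∏ k ∈ Finset.range M, f k := hsplit
    -- lower bound on P (Bad 0)
    have hAnti : Antitone fun N => ⋂ k ∈ Finset.range N, Y ((0:ℤ) - (k : ℤ)) ⁻¹' Set.Iic k := by
      intro a b hab ω hω
      simp only [Set.mem_iInter] at hω ⊢
      intro k hk
      exact hω k (Finset.mem_range.mpr (lt_of_lt_of_le (Finset.mem_range.mp hk) hab))
    have hInter : (⋂ N : ℕ, ⋂ k ∈ Finset.range N, Y ((0:ℤ) - (k : ℤ)) ⁻¹' Set.Iic k) = Bad 0 := by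
      ext ω
      simp only [Set.mem_iInter, hBad_def]
      constructor
      · intro h k
        exact h (k + 1) k (Finset.mem_range.mpr (Nat.lt_succ_self k))
      · intro h N k _
        exact h k
    have htm := tendsto_measure_iInter_atTop
      (s := fun N => ⋂ k ∈ Finset.range N, Y ((0:ℤ) - (k : ℤ)) ⁻¹' Set.Iic k)
      (fun N => (MeasurableSet.biInter (Finset.range N).countable_toSet
        fun k _ => hYmeas _ measurableSet_Iic).nullMeasurableSet)
      hAnti ⟨0, measure_ne_top P _⟩
    rw [hInter] at htm
    have hge : ENNReal.ofReal c ≤ P (Bad 0) := by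
      refine ge_of_tendsto' htm fun N => ?_
      show ENNReal.ofReal c ≤ P (⋂ k ∈ Finset.range N, Y ((0:ℤ) - (k : ℤ)) ⁻¹' Set.Iic k)
      rw [hprod 0 N]
      exact ENNReal.ofReal_le_ofReal (hlow N)
    have hzero : P (Bad 0) = 0 :=
      le_antisymm (le_trans (measure_mono (Set.subset_iUnion Bad 0)) (le_of_eq h0)) zero_le
    rw [hzero] at hge
    exact absurd (le_antisymm hge zero_le) (ne_of_gt (ENNReal.ofReal_pos.mpr hcpos))
  · -- infinite expectation → P (⋃ Bad) = 0
    intro hS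
    rw [hkey] at hS
    refine measure_iUnion_null fun m => ?_
    have hPS : Tendsto (fun N => ∑ k ∈ Finset.range N, t k) atTop atTop := by
      have h1 := ENNReal.tendsto_nat_tsum fun k => ENNReal.ofReal (t k)
      rw [hS] at h1
      rw [tendsto_atTop]
      intro b
      have h2 : ∀ᶠ N in atTop,
          ENNReal.ofReal b < ∑ k ∈ Finset.range N, ENNReal.ofReal (t k) :=
        h1.eventually (eventually_gt_nhds ENNReal.ofReal_lt_top)
      filter_upwards [h2] with N hN
      by_contra hb
      push_neg at hb
      rw [← ENNReal.ofReal_sum_of_nonneg fun k _ => htnn k] at hN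
      exact absurd (ENNReal.ofReal_le_ofReal (le_of_lt hb)) (not_le.mpr hN)
    have hploop : Tendsto (fun N => ∏ k ∈ Finset.range N, f k) atTop (𝓝 0) := by
      refine squeeze_zero (g := fun N => Real.exp (-(∑ k ∈ Finset.range N, t k)))
        (fun N => Finset.prod_nonneg fun k _ => hfnn k) (fun N => ?_) ?_
      · calc ∏ k ∈ Finset.range N, f k ≤ ∏ k ∈ Finset.range N, Real.exp (-(t k)) := by
              refine Finset.prod_le_prod (fun k _ => hfnn k) fun k _ => ?_
              have h1 := Real.add_one_le_exp (-(t k))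
              have h2 := hft k
              linarith
          _ = Real.exp (∑ k ∈ Finset.range N, -(t k)) := (Real.exp_sum _ _).symm
          _ = Real.exp (-(∑ k ∈ Finset.range N, t k)) := by rw [Finset.sum_neg_distrib]
      · exact Real.tendsto_exp_atBot.comp (tendsto_neg_atTop_atBot.comp hPS)
    refine le_antisymm ?_ zero_le
    have hlim : Tendsto (fun N => ENNReal.ofReal (∏ k ∈ Finset.range N, f k)) atTop (𝓝 0) := by
      have h1 := ENNReal.tendsto_ofReal hploop
      rwa [ENNReal.ofReal_zero] at h1
    refine ge_of_tendsto' hlim fun N => ?_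
    rw [← hprod m N]
    refine measure_mono fun ω hω => ?_
    simp only [Set.mem_iInter, hBad_def] at hω ⊢
    intro k _
    exact hω k
end

section
/- Let μ be a probability vector on ℕ₀ with μ₀ ∈ (0,1), and let P be the transition matrix of the random exchange process on its state space 𝒳. Then there exists a probability vector τ on 𝒳 with τP = τ (equivalently, the irreducible chain (X_n)_{n≥0} is positive recurrent) if and only if μ has finite expectation, i.e. ∑_{n≥0} n·μ_n < ∞. -/
open MeasureTheory Finset Filter Topology ENNReal NNReal

/-- The state space `𝒳` of the random exchange process: all of `ℕ` if `μ` has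
unbounded support, and `{0, 1, …, n₀}` with `n₀ = sup {n | μ n ≠ 0}` otherwise
(note `μ 0 > 0`, so this is exactly `{x | ∃ n ≥ x, μ n ≠ 0}`). -/
def exchangeStateSpace (μ : ℕ → ℝ) : Set ℕ := {x | ∃ n, x ≤ n ∧ μ n ≠ 0}

/-- The transition matrix of the (constant decrement) random exchange process:
`P x y = μ y` for `y ≥ x`, `P x (x-1) = ∑_{z<x} μ z`, and `P x y = 0` for `y ≤ x - 2`. -/
noncomputable def exchangeKernel (μ : ℕ → ℝ) : ℕ → ℕ → ℝ := fun x y =>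
  if x ≤ y then μ y else if y + 1 = x then ∑ z ∈ Finset.range x, μ z else 0

lemma key_ennreal (ν : ℕ → ℝ≥0∞) :
    ∑' (j : ℕ), ∑' (n : ℕ), ν (n + (j + 1)) = ∑' (m : ℕ), (m : ℝ≥0∞) * ν m := by
  have h1 : ∀ j : ℕ, ∑' (n : ℕ), ν (n + (j + 1))
      = ∑' m, (if j < m then ν m else 0) := by
    intro j
    have hg : Function.Injective (fun n : ℕ => n + (j + 1)) :=
      add_left_injective (j + 1)
    have := hg.tsum_eq (f := fun m => if j < m then ν m else 0) ?_
    · rw [← this]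
      refine tsum_congr fun n => ?_
      have : j < n + (j + 1) := by omega
      simp [this]
    · intro m hm
      simp only [Function.mem_support, ne_eq, ite_eq_right_iff, not_forall] at hm
      obtain ⟨hjm, -⟩ := hm
      exact ⟨m - (j + 1), by simp; omega⟩
  simp_rw [h1]
  rw [ENNReal.tsum_comm]
  refine tsum_congr fun m => ?_
  rw [tsum_eq_sum (s := Finset.range m) (by intro j hj; simp at hj; simp [hj])]
  rw [Finset.sum_ite_of_true (by intro j hj; simpa using hj)]
  simp [mul_comm]

lemma tail_summable_iff (μ : ℕ → ℝ) (hnn : ∀ n, 0 ≤ μ n) (hs : Summable μ) :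
    Summable (fun j => ∑' n, μ (n + (j + 1))) ↔
      Summable (fun m : ℕ => (m : ℝ) * μ m) := by
  set ν : ℕ → ℝ≥0 := fun n => ⟨μ n, hnn n⟩ with hν
  have hcoe : ∀ n, (ν n : ℝ) = μ n := fun n => rfl
  have hsν : Summable ν := NNReal.summable_coe.mp (by simpa [hcoe] using hs)
  have hshift : ∀ j : ℕ, Summable fun n => ν (n + (j + 1)) := fun j =>
    (summable_nat_add_iff (j + 1)).2 hsν
  have htail : ∀ j : ℕ, ∑' n, μ (n + (j + 1)) = ((∑' n, ν (n + (j + 1)) : ℝ≥0) : ℝ) := by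
    intro j; rw [NNReal.coe_tsum]; exact tsum_congr fun n => (hcoe _).symm
  have h1 : Summable (fun j => ∑' n, μ (n + (j + 1))) ↔
      Summable (fun j => (∑' n, ν (n + (j + 1)) : ℝ≥0)) := by
    simp_rw [htail]; exact NNReal.summable_coe
  have h2 : Summable (fun m : ℕ => (m : ℝ) * μ m) ↔
      Summable (fun m : ℕ => (m : ℝ≥0) * ν m) := by
    rw [← NNReal.summable_coe]; push_cast; simp_rw [hcoe]
  rw [h1, h2, ← ENNReal.tsum_coe_ne_top_iff_summable, ← ENNReal.tsum_coe_ne_top_iff_summable]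
  have h3 : ∀ j : ℕ, ((∑' n, ν (n + (j + 1)) : ℝ≥0) : ℝ≥0∞)
      = ∑' n, (ν (n + (j + 1)) : ℝ≥0∞) := fun j => ENNReal.coe_tsum (hshift j)
  simp_rw [h3, key_ennreal (fun n => (ν n : ℝ≥0∞))]
  push_cast
  rfl

/-- The random exchange process with driving distribution `μ`
admits a stationary probability vector (supported on its state space `𝒳`),
equivalently it is positive recurrent, iff `μ` has finite expectation. -/
theorem exchange_process_positive_recurrent_iff_finite_expectation
    (μ : ℕ → ℝ) (hμnonneg : ∀ n, 0 ≤ μ n) (hμsum : ∑' n, μ n = 1)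
    (hμ0pos : 0 < μ 0) (hμ0lt : μ 0 < 1) :
    (∃ τ : ℕ → ℝ, (∀ x, 0 ≤ τ x) ∧ (∀ x ∉ exchangeStateSpace μ, τ x = 0) ∧
        (∑' x, τ x = 1) ∧
        (∀ y ∈ exchangeStateSpace μ, ∑' x, τ x * exchangeKernel μ x y = τ y)) ↔
      Summable (fun n : ℕ => (n : ℝ) * μ n) := by
  have hSμ : Summable μ := by
    by_contra h
    rw [tsum_eq_zero_of_not_summable h] at hμsum
    norm_num at hμsum
  set F : ℕ → ℝ := fun y => ∑ z ∈ Finset.range (y + 1), μ z with hF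
  have hFle : ∀ y, F y ≤ 1 := fun y =>
    hμsum ▸ Summable.sum_le_tsum _ (fun i _ => hμnonneg i) hSμ
  have hμ0le : ∀ y, μ 0 ≤ F y := fun y =>
    Finset.single_le_sum (f := μ) (fun i _ => hμnonneg i) (by simp)
  have hFpos : ∀ y, 0 < F y := fun y => lt_of_lt_of_le hμ0pos (hμ0le y)
  have htailF : ∀ j, ∑' n, μ (n + (j + 1)) = 1 - F j := by
    intro j
    have h := Summable.sum_add_tsum_nat_add (f := μ) (j + 1) hSμ
    rw [hμsum] at h
    linarith [h]
  have hFsucc : ∀ y, F (y + 1) = F y + μ (y + 1) := by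
    intro y; simp [hF, Finset.sum_range_succ]
  have hker : ∀ (τ : ℕ → ℝ) (y : ℕ), ∑' x, τ x * exchangeKernel μ x y
      = (∑ x ∈ Finset.range (y + 1), τ x) * μ y + τ (y + 1) * F y := by
    intro τ y
    rw [tsum_eq_sum (s := Finset.range (y + 2)) ?_]
    · rw [Finset.sum_range_succ]
      congr 1
      · rw [Finset.sum_mul]
        refine Finset.sum_congr rfl fun x hx => ?_
        simp only [Finset.mem_range] at hx
        have hxy : x ≤ y := by omega
        simp [exchangeKernel, hxy]
      · have h1 : ¬ (y + 1 ≤ y) := by omega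
        simp [exchangeKernel, h1, hF]
    · intro x hx
      simp only [Finset.mem_range] at hx
      have h1 : ¬ x ≤ y := by omega
      have h2 : y + 1 ≠ x := by omega
      simp [exchangeKernel, h1, h2]
  constructor
  · rintro ⟨τ, hτnn, hτsupp, hτsum, hτstat⟩
    by_cases hbdd : ∃ N, ∀ n, N ≤ n → μ n = 0
    · obtain ⟨N, hN⟩ := hbdd
      refine summable_of_ne_finset_zero (s := Finset.range N) fun n hn => ?_
      rw [hN n (by simpa using hn), mul_zero]
    · push_neg at hbdd
      have hX : ∀ x, x ∈ exchangeStateSpace μ := fun x => hbdd x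
      have hSτ : Summable τ := by
        by_contra h
        rw [tsum_eq_zero_of_not_summable h] at hτsum
        norm_num at hτsum
      set S : ℕ → ℝ := fun y => ∑ x ∈ Finset.range (y + 1), τ x with hS
      have hstat : ∀ y, S y * μ y + τ (y + 1) * F y = τ y := by
        intro y
        have h := hτstat y (hX y)
        rw [hker τ y] at h
        exact h
      have hSsucc : ∀ y, S (y + 1) = S y + τ (y + 1) := by
        intro y; simp [hS, Finset.sum_range_succ]
      have hkey : ∀ y, F y * S (y + 1) = S y := by
        intro y
        induction y with
        | zero =>
          have h := hstat 0
          have h1 : S 0 = τ 0 := by simp [hS]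
          have h2 : F 0 = μ 0 := by simp [hF]
          have h3 := hSsucc 0
          rw [h1, h2] at h ⊢
          rw [h3, h1]
          linear_combination h
        | succ z ih =>
          have h := hstat (z + 1)
          have e2 := hSsucc (z + 1)
          have e1 := hSsucc z
          have hf := hFsucc z
          rw [e2]
          linear_combination h + S (z + 1) * hf + ih - e1
      have hSle1 : ∀ N, S N ≤ 1 := fun N =>
        hτsum ▸ Summable.sum_le_tsum _ (fun i _ => hτnn i) hSτ
      have hprod : ∀ N, S 0 = (∏ j ∈ Finset.range N, F j) * S N := by
        intro N
        induction N with
        | zero => simp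
        | succ n ih =>
          rw [ih, Finset.prod_range_succ, ← hkey n]
          ring
      have hSlim : Tendsto S atTop (𝓝 1) := by
        have h := hSτ.hasSum.tendsto_sum_nat
        rw [hτsum] at h
        exact h.comp (tendsto_add_atTop_nat 1)
      have hS0pos : 0 < S 0 := by
        rcases lt_or_eq_of_le (by simpa [hS] using hτnn 0 : (0:ℝ) ≤ S 0) with h | h
        · exact h
        · exfalso
          have hzero : ∀ N, S N = 0 := by
            intro N
            have hp := hprod N
            have hppos : 0 < ∏ j ∈ Finset.range N, F j :=
              Finset.prod_pos fun j _ => hFpos j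
            rw [← h] at hp
            rcases mul_eq_zero.mp hp.symm with h1 | h1
            · exact absurd h1 (ne_of_gt hppos)
            · exact h1
          have : Tendsto S atTop (𝓝 0) := by
            simpa [funext hzero] using tendsto_const_nhds (α := ℝ) (f := atTop (α := ℕ))
          exact one_ne_zero (tendsto_nhds_unique hSlim this)
      have hbound : ∀ N, ∑ j ∈ Finset.range N, (1 - F j) ≤ -Real.log (S 0) := by
        intro N
        have h1 : ∀ j, 1 - F j ≤ -Real.log (F j) := by
          intro j
          have := Real.log_le_sub_one_of_pos (hFpos j)
          linarith
        calc ∑ j ∈ Finset.range N, (1 - F j)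
            ≤ ∑ j ∈ Finset.range N, -Real.log (F j) :=
              Finset.sum_le_sum fun j _ => h1 j
          _ = -Real.log (∏ j ∈ Finset.range N, F j) := by
              rw [Real.log_prod fun j _ => ne_of_gt (hFpos j), ← Finset.sum_neg_distrib]
          _ ≤ -Real.log (S 0) := by
              have hle : S 0 ≤ ∏ j ∈ Finset.range N, F j := by
                have hp := hprod N
                nlinarith [Finset.prod_pos (fun j (_ : j ∈ Finset.range N) => hFpos j), hSle1 N]
              have := Real.log_le_log hS0pos hle
              linarith
      have hGsum : Summable fun j => 1 - F j :=
        summable_of_sum_range_le (fun j => by linarith [hFle j]) hbound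
      refine (tail_summable_iff μ hμnonneg hSμ).mp ?_
      simpa [htailF] using hGsum
  · intro hsummable
    have hGsum : Summable fun j => 1 - F j := by
      have h := (tail_summable_iff μ hμnonneg hSμ).mpr hsummable
      simpa [htailF] using h
    set L : ℕ → ℝ := fun j => -Real.log (F j) with hL
    have hLnn : ∀ j, 0 ≤ L j := by
      intro j
      have := Real.log_nonpos (le_of_lt (hFpos j)) (hFle j)
      simp [hL]; linarith
    have hLle : ∀ j, L j ≤ (1 - F j) * (μ 0)⁻¹ := by
      intro j
      have h1 : Real.log (F j)⁻¹ ≤ (F j)⁻¹ - 1 :=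
        Real.log_le_sub_one_of_pos (inv_pos.2 (hFpos j))
      rw [Real.log_inv] at h1
      have h2 : (F j)⁻¹ - 1 = (1 - F j) * (F j)⁻¹ := by
        rw [sub_mul, one_mul, mul_inv_cancel₀ (ne_of_gt (hFpos j))]
      have h3 : (F j)⁻¹ ≤ (μ 0)⁻¹ := by
        apply inv_anti₀ hμ0pos (hμ0le j)
      have h4 : 0 ≤ 1 - F j := by linarith [hFle j]
      calc L j ≤ (F j)⁻¹ - 1 := by simpa [hL] using h1
        _ = (1 - F j) * (F j)⁻¹ := h2
        _ ≤ (1 - F j) * (μ 0)⁻¹ := mul_le_mul_of_nonneg_left h3 h4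
    have hLsum : Summable L :=
      Summable.of_nonneg_of_le hLnn hLle (hGsum.mul_right _)
    set R : ℕ → ℝ := fun y => ∑' j, L (j + y) with hR
    have hRnn : ∀ y, 0 ≤ R y := fun y => tsum_nonneg fun j => hLnn _
    have hRrec : ∀ y, R y = L y + R (y + 1) := by
      intro y
      have hs : Summable fun j => L (j + y) := (_root_.summable_nat_add_iff y).2 hLsum
      have h0 : R y = ∑' j, L (j + y) := rfl
      have h1 : R (y + 1) = ∑' j, L (j + (y + 1)) := rfl
      rw [h0, h1, Summable.tsum_eq_zero_add hs]
      congr 1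
      · simp
      · exact tsum_congr fun n => congrArg L (by omega)
    set Q : ℕ → ℝ := fun y => Real.exp (-R y) with hQ
    have hQpos : ∀ y, 0 < Q y := fun y => Real.exp_pos _
    have hQle1 : ∀ y, Q y ≤ 1 := fun y =>
      Real.exp_le_one_iff.mpr (by linarith [hRnn y])
    have hQrec : ∀ y, Q y = F y * Q (y + 1) := by
      intro y
      rw [hQ]
      simp only
      rw [hRrec y, neg_add, Real.exp_add]
      congr 1
      rw [hL]
      simp only [neg_neg]
      exact Real.exp_log (hFpos y)
    have hQlim : Tendsto Q atTop (𝓝 1) := by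
      have h1 : Tendsto R atTop (𝓝 0) := by
        have := tendsto_sum_nat_add L
        exact this
      have h2 : Tendsto (fun y => -R y) atTop (𝓝 0) := by
        simpa using h1.neg
      have := (Real.continuous_exp.tendsto 0).comp h2
      rw [Real.exp_zero] at this; exact this
    set τ : ℕ → ℝ := fun x => Nat.casesOn x (Q 0) (fun y => Q (y + 1) - Q y) with hτ
    have hQmono : ∀ y, Q y ≤ Q (y + 1) := by
      intro y
      have := hQrec y
      nlinarith [hQpos (y + 1), hFle y, hFpos y]
    have hτnn : ∀ x, 0 ≤ τ x := by
      intro x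
      cases x with
      | zero => exact le_of_lt (hQpos 0)
      | succ y => simp [hτ]; linarith [hQmono y]
    have hSpartial : ∀ N, ∑ x ∈ Finset.range (N + 1), τ x = Q N := by
      intro N
      induction N with
      | zero => simp [hτ]
      | succ n ih => rw [Finset.sum_range_succ, ih]; simp [hτ]
    have hSτ : Summable τ :=
      summable_of_sum_range_le (c := 1) hτnn (by
        intro n
        cases n with
        | zero => norm_num
        | succ N => rw [hSpartial N]; exact hQle1 N)
    have hτsum : ∑' x, τ x = 1 := by
      have h1 := hSτ.hasSum.tendsto_sum_nat
      have h2 : Tendsto (fun n => ∑ x ∈ Finset.range n, τ x) atTop (𝓝 1) := by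
        rw [← tendsto_add_atTop_iff_nat 1]
        simpa [hSpartial] using hQlim
      exact tendsto_nhds_unique h1 h2
    refine ⟨τ, hτnn, ?_, hτsum, ?_⟩
    · intro x hx
      simp only [exchangeStateSpace, Set.mem_setOf_eq, not_exists, not_and, not_not] at hx
      match x with
      | 0 => exact absurd (hx 0 le_rfl) (ne_of_gt hμ0pos)
      | y + 1 =>
        have hFy : F y = 1 := by
          have h1 : ∑' n, μ (n + (y + 1)) = 0 := by
            have hz : ∀ n : ℕ, μ (n + (y + 1)) = 0 := fun n => hx _ (by omega)
            rw [tsum_congr hz, tsum_zero]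
          rw [htailF] at h1
          linarith
        have : Q y = Q (y + 1) := by rw [hQrec y, hFy, one_mul]
        simp [hτ, this]
    · intro y _
      rw [hker τ y]
      have hSp := hSpartial y
      cases y with
      | zero =>
        have h0 : Q 0 = μ 0 * Q 1 := by
          rw [hQrec 0]; congr 1; simp [hF]
        have hf0 : F 0 = μ 0 := by simp [hF]
        rw [hSp, hf0]
        simp only [hτ]
        linear_combination -h0
      | succ z =>
        have hq1 := hQrec (z + 1)
        have hq0 := hQrec z
        have hf := hFsucc z
        rw [hSp]
        simp only [hτ]
        linear_combination (-1) * hq1 + hq0 + (-(Q (z+1))) * hf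
end

section
/- Let μ be a probability vector on ℕ₀ with μ₀ ∈ (0,1), let 𝒳 be the state space of the random exchange process and P its transition matrix. Define τ on 𝒳 by τ_x = (∑_{z≥x} μ_z) · (∏_{y=0}^{x−1} ∑_{z=0}^{y} μ_z)^{−1} (so τ₀ = 1). Then τ is an invariant measure for P: for every x with x, x+1 ∈ 𝒳, one has τ_x = (∑_{z=0}^{x} τ_z)·μ_x + τ_{x+1}·∑_{z=0}^{x} μ_z. -/
open MeasureTheory

/-- The measure
`τ x = (∑_{z ≥ x} μ z) · (∏_{y=0}^{x-1} ∑_{z=0}^{y} μ z)⁻¹` (with `τ 0 = 1`) is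
invariant for the transition matrix of the random exchange process: for every `x`
with `x, x+1 ∈ 𝒳` it satisfies `τ x = (∑_{z=0}^{x} τ z) · μ x + τ (x+1) · ∑_{z=0}^{x} μ z`. -/
theorem exchange_process_invariant_measure
    (μ : ℕ → ℝ) (hμnonneg : ∀ n, 0 ≤ μ n) (hμsum : ∑' n, μ n = 1)
    (hμ0pos : 0 < μ 0) (hμ0lt : μ 0 < 1)
    (τ : ℕ → ℝ)
    (hτ : ∀ x, τ x = (∑' z : ℕ, if x ≤ z then μ z else 0) *
      (∏ y ∈ Finset.range x, ∑ z ∈ Finset.range (y + 1), μ z)⁻¹) :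
    ∀ x : ℕ, x ∈ exchangeStateSpace μ → x + 1 ∈ exchangeStateSpace μ →
      τ x = (∑ z ∈ Finset.range (x + 1), τ z) * μ x +
        τ (x + 1) * ∑ z ∈ Finset.range (x + 1), μ z := by
  have hsummable : Summable μ := by
    by_contra h
    rw [tsum_eq_zero_of_not_summable h] at hμsum
    norm_num at hμsum
  have hσpos : ∀ y : ℕ, 0 < ∑ z ∈ Finset.range (y + 1), μ z := fun y =>
    Finset.sum_pos' (fun i _ => hμnonneg i)
      ⟨0, Finset.mem_range.2 (Nat.succ_pos y), hμ0pos⟩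
  have hPpos : ∀ x : ℕ, 0 < ∏ y ∈ Finset.range x, ∑ z ∈ Finset.range (y + 1), μ z :=
    fun x => Finset.prod_pos (fun y _ => hσpos y)
  -- tail sum formula
  have hS : ∀ x : ℕ, (∑' z : ℕ, if x ≤ z then μ z else 0)
      = 1 - ∑ z ∈ Finset.range x, μ z := by
    intro x
    have hsum2 : Summable (fun z : ℕ => if x ≤ z then μ z else 0) := by
      refine Summable.of_nonneg_of_le (fun n => ?_) (fun n => ?_) hsummable
      · split <;> [exact hμnonneg n; exact le_rfl]
      · split <;> [exact le_rfl; exact hμnonneg n]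
    have h1 := Summable.sum_add_tsum_nat_add x hsum2
    have h2 := Summable.sum_add_tsum_nat_add x hsummable
    rw [hμsum] at h2
    have e1 : ∑ i ∈ Finset.range x, (if x ≤ i then μ i else 0) = 0 := by
      apply Finset.sum_eq_zero
      intro i hi
      have := Finset.mem_range.mp hi
      rw [if_neg (by omega)]
    have e2 : (∑' i : ℕ, if x ≤ i + x then μ (i + x) else 0) = ∑' i : ℕ, μ (i + x) := by
      apply tsum_congr
      intro i
      rw [if_pos (by omega)]
    rw [e1, zero_add, e2] at h1
    linarith
  -- closed form for partial sums of τ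
  have hsum_τ : ∀ x : ℕ, ∑ z ∈ Finset.range (x + 1), τ z
      = (∏ y ∈ Finset.range x, ∑ z ∈ Finset.range (y + 1), μ z)⁻¹ := by
    intro x
    induction x with
    | zero =>
      rw [Finset.sum_range_one, hτ 0, hS 0]
      simp
    | succ n ih =>
      rw [Finset.sum_range_succ, ih, hτ (n + 1), hS (n + 1),
        Finset.prod_range_succ]
      have h1 : (∏ y ∈ Finset.range n, ∑ z ∈ Finset.range (y + 1), μ z) ≠ 0 :=
        ne_of_gt (hPpos n)
      have h2 : (∑ z ∈ Finset.range (n + 1), μ z) ≠ 0 := ne_of_gt (hσpos n)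
      field_simp
      ring
  intro x _ _
  rw [hsum_τ x, hτ x, hτ (x + 1), hS x, hS (x + 1), Finset.prod_range_succ,
    Finset.sum_range_succ μ x]
  have h1 : (∏ y ∈ Finset.range x, ∑ z ∈ Finset.range (y + 1), μ z) ≠ 0 :=
    ne_of_gt (hPpos x)
  have h2 : (∑ z ∈ Finset.range (x + 1), μ z) ≠ 0 := ne_of_gt (hσpos x)
  rw [Finset.sum_range_succ μ x] at h2
  field_simp
  ring
end

section
/- Let n ≥ 1, let μ be a probability vector on ℕ₀ with μ₀ ∈ (0,1), and consider the Boolean percolation model on the directed lattice ℤⁿ (edges (x, x+e_j), j = 1,…,n). Then V_μ(ℤⁿ) = ℤⁿ almost surely if and only if the n-th moment of μ diverges, i.e. ∑_{m≥0} mⁿ·μ_m = ∞. -/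
open MeasureTheory ProbabilityTheory
open scoped ENNReal

lemma aux_one_sub_mul_one_add (a : ℝ≥0∞) (ha : a ≤ 1) : (1 - a) * (1 + a) ≤ 1 := by
  have hne : a ≠ ⊤ := ne_top_of_le_ne_top ENNReal.one_ne_top ha
  have h1 : (1 - a) * (1 + a) = 1 * (1 + a) - a * (1 + a) :=
    ENNReal.sub_mul (fun _ _ => by finiteness)
  rw [h1, one_mul]
  calc (1 + a) - a * (1 + a) ≤ (1 + a) - a := by
        refine tsub_le_tsub_left ?_ _
        exact le_mul_of_one_le_right (zero_le) (by simp)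
    _ = 1 := ENNReal.add_sub_cancel_right hne

lemma aux_one_add_sum_le_prod {ι : Type*} (S : Finset ι) (a : ι → ℝ≥0∞) :
    1 + ∑ i ∈ S, a i ≤ ∏ i ∈ S, (1 + a i) := by
  classical
  induction S using Finset.cons_induction with
  | empty => simp
  | cons j S hj ih =>
    rw [Finset.sum_cons, Finset.prod_cons]
    calc 1 + (a j + ∑ i ∈ S, a i) = (1 + ∑ i ∈ S, a i) + a j := by ring
      _ ≤ (∏ i ∈ S, (1 + a i)) + a j := by gcongr
      _ ≤ (1 + a j) * ∏ i ∈ S, (1 + a i) := by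
          rw [add_mul, one_mul]
          gcongr
          exact le_mul_of_one_le_right (zero_le) (Finset.one_le_prod' (fun _ _ => le_self_add))
          -- a j ≤ a j * ∏ (1 + a i)

lemma aux_one_sub_sum_le_prod {ι : Type*} (S : Finset ι) (a : ι → ℝ≥0∞) :
    1 - ∑ i ∈ S, a i ≤ ∏ i ∈ S, (1 - a i) := by
  classical
  induction S using Finset.cons_induction with
  | empty => simp
  | cons j S hj ih =>
    rw [Finset.sum_cons, Finset.prod_cons]
    calc 1 - (a j + ∑ i ∈ S, a i) = (1 - ∑ i ∈ S, a i) - a j := by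
          rw [add_comm, tsub_add_eq_tsub_tsub]
      _ ≤ (∏ i ∈ S, (1 - a i)) - a j := by gcongr
      _ ≤ (1 - a j) * ∏ i ∈ S, (1 - a i) := by
          have hp : ∏ i ∈ S, (1 - a i) ≤ 1 := Finset.prod_le_one (fun _ _ => zero_le) (fun _ _ => tsub_le_self)
          have h1 : (1 - a j) * ∏ i ∈ S, (1 - a i) = 1 * ∏ i ∈ S, (1 - a i) - a j * ∏ i ∈ S, (1 - a i) :=
            ENNReal.sub_mul (fun _ _ => ne_top_of_le_ne_top ENNReal.one_ne_top hp)
          rw [h1, one_mul]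
          refine tsub_le_tsub_left ?_ _
          exact mul_le_of_le_one_right (zero_le) hp


lemma aux_moment_iff_Stot (n : ℕ) (hn : 1 ≤ n) (w : ℕ → ℝ≥0∞) :
    (∑' m : ℕ, (m : ℝ≥0∞) ^ n * w m = ⊤) ↔
      (∑' t : Fin n → ℕ, ∑' m : ℕ, if (∑ j, t j) < m then w m else 0) = ⊤ := by
  classical
  set A : Set ((Fin n → ℕ) × ℕ) := {p | ∑ j, p.1 j < p.2} with hA
  have hStot : (∑' t : Fin n → ℕ, ∑' m : ℕ, if (∑ j, t j) < m then w m else 0)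
      = ∑' (p : A), w p.1.2 := by
    rw [tsum_subtype A (fun p => w p.2), ← ENNReal.tsum_prod]
    congr 1
    funext p
    by_cases h : ∑ j, p.1 j < p.2 <;> simp [Set.indicator_apply, hA, h]
  have hmom : (∑' m : ℕ, (m : ℝ≥0∞) ^ n * w m)
      = ∑' (s : Σ m : ℕ, Fin n → Fin m), w s.1 := by
    rw [ENNReal.tsum_sigma' (fun s : (Σ m : ℕ, Fin n → Fin m) => w s.1)]
    congr 1
    funext m
    rw [tsum_fintype]
    simp [Finset.sum_const, Fintype.card_fun, nsmul_eq_mul]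
  -- Stot ≤ moment
  have hle1 : (∑' (p : A), w p.1.2) ≤ ∑' (s : Σ m : ℕ, Fin n → Fin m), w s.1 := by
    have hφ : Function.Injective (fun p : A =>
        (⟨p.1.2, fun j => ⟨p.1.1 j,
          lt_of_le_of_lt (Finset.single_le_sum (f := fun j => p.1.1 j)
            (fun _ _ => Nat.zero_le _) (Finset.mem_univ j)) p.2⟩⟩ :
          Σ m : ℕ, Fin n → Fin m)) := by
      rintro ⟨⟨t, m⟩, hp⟩ ⟨⟨t', m'⟩, hq⟩ h
      rw [Sigma.mk.inj_iff] at h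
      obtain ⟨rfl, h2⟩ := h
      rw [heq_iff_eq] at h2
      have ht : t = t' := by
        funext j
        have := congrFun h2 j
        simpa using congrArg Fin.val this
      subst ht
      rfl
    exact ENNReal.tsum_comp_le_tsum_of_injective hφ (fun s => w s.1)
  -- moment ≤ n^n * Stot
  have hle2 : (∑' (s : Σ m : ℕ, Fin n → Fin m), w s.1)
      ≤ (n : ℝ≥0∞) ^ n * ∑' (p : A), w p.1.2 := by
    have hnn : ((n : ℝ≥0∞)) ^ n * (∑' (p : A), w p.1.2)
        = ∑' (x : (Fin n → Fin n) × A), w x.2.1.2 := by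
      have h1 : ∑' (x : (Fin n → Fin n) × A), w x.2.1.2
          = ∑' (_a : Fin n → Fin n), ∑' (p : A), w p.1.2 := ENNReal.tsum_prod'
      rw [h1, tsum_fintype (f := fun _a : Fin n → Fin n => ∑' (p : A), w p.1.2)]
      simp [Finset.sum_const, Fintype.card_fun, nsmul_eq_mul, Nat.cast_pow]
    rw [hnn]
    have hψ : Function.Injective (fun s : Σ m : ℕ, Fin n → Fin m =>
        ((fun j => ⟨s.2 j % n, Nat.mod_lt _ (by omega)⟩,
          ⟨((fun j => s.2 j / n), s.1), by
            show ∑ j, s.2 j / n < s.1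
            have hm : 0 < s.1 := lt_of_le_of_lt (Nat.zero_le _) (s.2 ⟨0, by omega⟩).2
            calc ∑ j, (s.2 j : ℕ) / n ≤ ∑ _j : Fin n, (s.1 - 1) / n :=
                  Finset.sum_le_sum (fun j _ => Nat.div_le_div_right
                    (by have := (s.2 j).2; omega))
              _ = (s.1 - 1) / n * n := by simp [Finset.sum_const, mul_comm]
              _ ≤ s.1 - 1 := Nat.div_mul_le_self _ _
              _ < s.1 := by omega⟩) :
          (Fin n → Fin n) × A)) := by
      rintro ⟨m, u⟩ ⟨m', u'⟩ h
      simp only [Prod.mk.injEq, Subtype.mk.injEq] at h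
      obtain ⟨h1, h2, h3⟩ := h
      subst h3
      rw [Sigma.mk.inj_iff]
      refine ⟨rfl, heq_iff_eq.mpr ?_⟩
      funext j
      have hmod : (u j : ℕ) % n = (u' j : ℕ) % n := by
        have := congrFun h1 j
        simpa using congrArg Fin.val this
      have hdiv : (u j : ℕ) / n = (u' j : ℕ) / n := congrFun h2 j
      have e3 : n * ((u j : ℕ) / n) = n * ((u' j : ℕ) / n) := by rw [hdiv]
      have e1 := Nat.div_add_mod (u j : ℕ) n
      have e2 := Nat.div_add_mod (u' j : ℕ) n
      have : (u j : ℕ) = (u' j : ℕ) := by omega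
      exact Fin.ext this
    exact ENNReal.tsum_comp_le_tsum_of_injective hψ (fun x => w x.2.1.2)
  rw [hStot, hmom]
  constructor
  · intro h
    by_contra hne
    exact (ne_top_of_le_ne_top
      (ENNReal.mul_ne_top (ENNReal.pow_ne_top (ENNReal.natCast_ne_top n)) hne) hle2) h
  · intro h
    exact top_le_iff.mp (h ▸ hle1)


lemma aux_single {Ω : Type*} [MeasurableSpace Ω] (P : Measure Ω) (f : Ω → ℕ)
    (hf : Measurable f) (w : ℕ → ℝ≥0∞) (hd : ∀ k, P {ω | f ω = k} = w k) (d : ℕ) :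
    P {ω | f ω ≤ d} = ∑ k ∈ Finset.range (d + 1), w k := by
  classical
  have hset : {ω | f ω ≤ d} = ⋃ k ∈ Finset.range (d + 1), {ω | f ω = k} := by
    ext ω; simp [Nat.lt_succ_iff]
  rw [hset, measure_biUnion_finset ?_ ?_]
  · exact Finset.sum_congr rfl fun k _ => hd k
  · intro i _ j _ hij
    refine Set.disjoint_left.mpr fun ω h1 h2 => hij ?_
    simp only [Set.mem_setOf_eq] at h1 h2
    omega
  · intro k _
    exact hf (Set.to_countable {k}).measurableSet


set_option maxHeartbeats 2000000 in
/-- For Boolean percolation on the directed lattice `ℤⁿ`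
(edges `(x, x + eⱼ)`, so the vertex `y` is covered iff there is `x ≤ y`
coordinatewise with `∑ⱼ (yⱼ - xⱼ) < Y x`), almost surely every vertex is covered
iff the `n`-th moment of `μ` diverges, i.e. `∑ m, mⁿ · μ m = ∞`. -/
theorem boolean_percolation_Zn_all_covered_iff_nth_moment_infinite
    (n : ℕ) (hn : 1 ≤ n)
    (μ : ℕ → ℝ) (hμnonneg : ∀ m, 0 ≤ μ m) (hμsum : ∑' m, μ m = 1)
    (hμ0pos : 0 < μ 0) (hμ0lt : μ 0 < 1)
    (Ω : Type*) [MeasurableSpace Ω] (P : Measure Ω) [IsProbabilityMeasure P]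
    (Y : (Fin n → ℤ) → Ω → ℕ) (hYmeas : ∀ x, Measurable (Y x))
    (hYindep : iIndepFun Y P)
    (hYdist : ∀ x k, P {ω | Y x ω = k} = ENNReal.ofReal (μ k)) :
    P {ω | ∀ y : Fin n → ℤ, ∃ x : Fin n → ℤ,
        (∀ j, x j ≤ y j) ∧ (∑ j, (y j - x j)) < (Y x ω : ℤ)} = 1 ↔
      ∑' m : ℕ, (m : ℝ≥0∞) ^ n * ENNReal.ofReal (μ m) = ⊤ := by
  
  classical
  set w : ℕ → ℝ≥0∞ := fun m => ENNReal.ofReal (μ m) with hw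
  have hμsummable : Summable μ := by
    by_contra h
    rw [tsum_eq_zero_of_not_summable h] at hμsum
    norm_num at hμsum
  have hwtot : ∑' m, w m = 1 := by
    rw [hw, ← ENNReal.ofReal_tsum_of_nonneg hμnonneg hμsummable, hμsum, ENNReal.ofReal_one]
  set F : ℕ → ℝ≥0∞ := fun d => ∑ k ∈ Finset.range (d + 1), w k with hF
  set q : ℕ → ℝ≥0∞ := fun d => ∑' m, if d < m then w m else 0 with hq
  have hFq : ∀ d, F d + q d = 1 := by
    intro d
    have h1 : F d = ∑' m, if m ≤ d then w m else 0 := by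
      rw [hF]
      dsimp only
      rw [tsum_eq_sum (s := Finset.range (d + 1))
        (fun m hm => if_neg (by simp only [Finset.mem_range] at hm; omega))]
      exact (Finset.sum_congr rfl fun k hk =>
        if_pos (by simp only [Finset.mem_range] at hk; omega)).symm
    rw [h1, hq, ← ENNReal.tsum_add, ← hwtot]
    congr 1
    funext m
    by_cases h : m ≤ d
    · simp [h, not_lt.mpr h]
    · simp [h, lt_of_not_ge h]
  have hq_le : ∀ d, q d ≤ 1 := fun d => (hFq d) ▸ le_add_self
  have hF_le : ∀ d, F d ≤ 1 := fun d => (hFq d) ▸ le_self_add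
  have hFq' : ∀ d, F d = 1 - q d := fun d => by
    rw [← hFq d, ENNReal.add_sub_cancel_right
      (ne_top_of_le_ne_top ENNReal.one_ne_top (hq_le d))]
  have hF_pos : ∀ d, 0 < F d := by
    intro d
    have h0 : w 0 ≤ F d :=
      Finset.single_le_sum (f := w) (fun i _ => zero_le) (by simp)
    exact lt_of_lt_of_le (ENNReal.ofReal_pos.mpr hμ0pos) h0
  -- single event measure
  have hsingle : ∀ (x : Fin n → ℤ) (d : ℕ), P {ω | Y x ω ≤ d} = F d := fun x d =>
    aux_single P (Y x) (hYmeas x) w (fun k => hYdist x k) d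
  -- independence product over finite sets of sites
  have hprodx : ∀ (D : (Fin n → ℤ) → ℕ) (S' : Finset (Fin n → ℤ)),
      P (⋂ x ∈ S', {ω | Y x ω ≤ D x}) = ∏ x ∈ S', F (D x) := by
    intro D S'
    rw [hYindep.meas_biInter (s := fun x => {ω | Y x ω ≤ D x}) (fun x _ =>
      MeasurableSpace.measurableSet_comap.mpr ⟨{k | k ≤ D x}, trivial, rfl⟩)]
    exact Finset.prod_congr rfl fun x _ => hsingle x (D x)
  -- product formula in t-coordinates
  have hprod : ∀ (y : Fin n → ℤ) (S : Finset (Fin n → ℕ)),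
      P (⋂ t ∈ S, {ω | Y (fun j => y j - (t j : ℤ)) ω ≤ ∑ j, t j})
        = ∏ t ∈ S, F (∑ j, t j) := by
    intro y S
    set g : (Fin n → ℕ) → (Fin n → ℤ) := fun t j => y j - (t j : ℤ) with hg
    have hginj : Function.Injective g := by
      intro a b h
      funext j
      have := congrFun h j
      simp only [hg] at this
      omega
    set D : (Fin n → ℤ) → ℕ := fun x => (∑ j, (y j - x j)).toNat with hD0
    have hD : ∀ t : Fin n → ℕ, D (g t) = ∑ j, t j := by
      intro t
      simp only [hD0, hg, sub_sub_cancel]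
      rw [← Nat.cast_sum]
      exact Int.toNat_natCast _
    have him : (⋂ t ∈ S, {ω | Y (fun j => y j - (t j : ℤ)) ω ≤ ∑ j, t j})
        = ⋂ x ∈ S.image g, {ω | Y x ω ≤ D x} := by
      ext ω
      simp only [Set.mem_iInter]
      constructor
      · intro h x hx
        rw [Finset.mem_image] at hx
        obtain ⟨t, ht, rfl⟩ := hx
        have := h t ht
        show Y (g t) ω ≤ D (g t)
        rw [hD t]
        exact this
      · intro h t ht
        have := h (g t) (Finset.mem_image_of_mem g ht)
        have h2 : Y (g t) ω ≤ D (g t) := this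
        rw [hD t] at h2
        exact h2
    rw [him, hprodx D (S.image g),
      Finset.prod_image (fun a _ b _ h => hginj h)]
    exact Finset.prod_congr rfl fun t _ => by rw [hD t]

  set Aset : (Fin n → ℤ) → Set Ω := fun y =>
    {ω | ∃ x : Fin n → ℤ, (∀ j, x j ≤ y j) ∧ (∑ j, (y j - x j)) < (Y x ω : ℤ)} with hAset
  have hmeasA : ∀ y, MeasurableSet (Aset y) := by
    intro y
    have hset : Aset y = ⋃ x : Fin n → ℤ,
        {ω | (∀ j, x j ≤ y j) ∧ (∑ j, (y j - x j)) < (Y x ω : ℤ)} := by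
      ext ω; simp [hAset]
    rw [hset]
    refine MeasurableSet.iUnion fun x => ?_
    by_cases hx : ∀ j, x j ≤ y j
    · have h2 : {ω | (∀ j, x j ≤ y j) ∧ (∑ j, (y j - x j)) < (Y x ω : ℤ)}
          = Y x ⁻¹' {k : ℕ | (∑ j, (y j - x j)) < (k : ℤ)} := by
        ext ω; simp [hx]
      rw [h2]
      exact hYmeas x ((Set.to_countable _).measurableSet)
    · have h2 : {ω | (∀ j, x j ≤ y j) ∧ (∑ j, (y j - x j)) < (Y x ω : ℤ)} = ∅ := by
        ext ω; simp [hx]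
      rw [h2]
      exact MeasurableSet.empty
  have hGeq : {ω | ∀ y : Fin n → ℤ, ∃ x : Fin n → ℤ,
      (∀ j, x j ≤ y j) ∧ (∑ j, (y j - x j)) < (Y x ω : ℤ)} = ⋂ y, Aset y := by
    ext ω; simp [hAset, Set.mem_iInter]
  rw [hGeq]
  constructor
  · -- P = 1 → moment = ⊤
    intro hP
    by_contra hmom
    -- moment finite, derive contradiction
    have hS : (∑' t : Fin n → ℕ, q (∑ j, t j)) ≠ ⊤ := by
      intro h
      exact hmom ((aux_moment_iff_Stot n hn w).mpr h)
    set y0 : Fin n → ℤ := 0 with hy0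
    obtain ⟨T, hT⟩ := ((ENNReal.tendsto_tsum_compl_atTop_zero hS).eventually_lt_const
      (show (0:ℝ≥0∞) < 1/2 by norm_num)).exists
    set TAIL : ℝ≥0∞ := ∑' (b : {t : Fin n → ℕ // t ∉ T}), q (∑ j, (b : Fin n → ℕ) j)
      with hTAILdef
    have hTAILlt : TAIL < 1 := lt_of_lt_of_le hT (by norm_num)
    set Ev0 : (Fin n → ℕ) → Set Ω :=
      fun t => {ω | Y (fun j => y0 j - (t j : ℤ)) ω ≤ ∑ j, t j} with hEv0
    have hmeasEv : ∀ t, MeasurableSet (Ev0 t) := by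
      intro t
      have : Ev0 t = Y (fun j => y0 j - (t j : ℤ)) ⁻¹' {k : ℕ | k ≤ ∑ j, t j} := rfl
      rw [this]
      exact hYmeas _ ((Set.to_countable _).measurableSet)
    set sfam : Finset (Fin n → ℕ) → Set Ω := fun S => ⋂ t ∈ S, Ev0 t with hsfam
    have hdir : Directed (· ⊇ ·) sfam := by
      intro S S'
      refine ⟨S ∪ S', ?_, ?_⟩
      · intro ω hω
        exact Set.mem_iInter₂.mpr fun t ht =>
          Set.mem_iInter₂.mp hω t (Finset.mem_union_left _ ht)
      · intro ω hω
        exact Set.mem_iInter₂.mpr fun t ht =>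
          Set.mem_iInter₂.mp hω t (Finset.mem_union_right _ ht)
    have hintereq : ⋂ S : Finset (Fin n → ℕ), sfam S = ⋂ t, Ev0 t := by
      apply Set.Subset.antisymm
      · intro ω hω
        refine Set.mem_iInter.mpr fun t => ?_
        exact Set.mem_iInter₂.mp (Set.mem_iInter.mp hω {t}) t (Finset.mem_singleton_self t)
      · intro ω hω
        exact Set.mem_iInter.mpr fun S =>
          Set.mem_iInter₂.mpr fun t _ => Set.mem_iInter.mp hω t
    have hPinter : P (⋂ t, Ev0 t) = ⨅ S : Finset (Fin n → ℕ), P (sfam S) := by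
      rw [← hintereq]
      exact Directed.measure_iInter
        (fun S => (MeasurableSet.biInter (Set.to_countable _)
          (fun t _ => hmeasEv t)).nullMeasurableSet)
        hdir ⟨∅, measure_ne_top P _⟩
    have hlowS : ∀ S : Finset (Fin n → ℕ),
        (∏ t ∈ T, F (∑ j, t j)) * (1 - TAIL) ≤ P (sfam S) := by
      intro S
      have hPS : P (sfam S) = ∏ t ∈ S, F (∑ j, t j) := hprod y0 S
      rw [hPS, ← Finset.prod_inter_mul_prod_diff S T (fun t => F (∑ j, t j))]
      refine mul_le_mul' ?_ ?_
      · calc ∏ t ∈ T, F (∑ j, t j)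
            = (∏ t ∈ T \ (S ∩ T), F (∑ j, t j)) * ∏ t ∈ S ∩ T, F (∑ j, t j) :=
              (Finset.prod_sdiff Finset.inter_subset_right).symm
          _ ≤ 1 * ∏ t ∈ S ∩ T, F (∑ j, t j) :=
              mul_le_mul' (Finset.prod_le_one (fun _ _ => zero_le) (fun t _ => hF_le _))
                le_rfl
          _ = ∏ t ∈ S ∩ T, F (∑ j, t j) := one_mul _
      · refine le_trans (le_trans ?_ (aux_one_sub_sum_le_prod (S \ T) (fun t => q (∑ j, t j))))
          (le_of_eq (Finset.prod_congr rfl fun t _ => (hFq' _).symm))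
        refine tsub_le_tsub_left ?_ 1
        have hTAIL2 : TAIL = ∑' t : Fin n → ℕ,
            Set.indicator {t : Fin n → ℕ | t ∉ T} (fun t => q (∑ j, t j)) t := by
          rw [hTAILdef]
          exact tsum_subtype {t : Fin n → ℕ | t ∉ T} (fun t => q (∑ j, t j))
        rw [hTAIL2]
        calc ∑ t ∈ S \ T, q (∑ j, t j)
            = ∑ t ∈ S \ T, Set.indicator {t : Fin n → ℕ | t ∉ T}
                (fun t => q (∑ j, t j)) t :=
              Finset.sum_congr rfl fun t ht =>
                (Set.indicator_of_mem
                  (show t ∈ {t : Fin n → ℕ | t ∉ T} from (Finset.mem_sdiff.mp ht).2)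
                  (fun t => q (∑ j, t j))).symm
          _ ≤ _ := ENNReal.sum_le_tsum _
    have hc0 : 0 < (∏ t ∈ T, F (∑ j, t j)) * (1 - TAIL) := by
      refine ENNReal.mul_pos ?_ ?_
      · exact Finset.prod_ne_zero_iff.mpr (fun t _ => (hF_pos _).ne')
      · exact (tsub_pos_of_lt hTAILlt).ne'
    have hsubcompl : (⋂ t, Ev0 t) ⊆ (Aset y0)ᶜ := by
      intro ω hω hmem
      rw [hAset] at hmem
      obtain ⟨x, hx, hlt⟩ := hmem
      set t : Fin n → ℕ := fun j => (y0 j - x j).toNat with ht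
      have hxt : (fun j => y0 j - (t j : ℤ)) = x := by
        funext j
        have := hx j
        simp only [ht]
        omega
      have harith : ((∑ j, t j : ℕ) : ℤ) = ∑ j, (y0 j - x j) := by
        rw [Nat.cast_sum]
        refine Finset.sum_congr rfl fun j _ => ?_
        have := hx j
        simp only [ht]
        omega
      have hEv := Set.mem_iInter.mp hω t
      rw [hEv0] at hEv
      simp only [Set.mem_setOf_eq, hxt] at hEv
      have hcast : ((∑ j, t j : ℕ) : ℤ) < (Y x ω : ℤ) := harith ▸ hlt
      have : (∑ j, t j) < Y x ω := by exact_mod_cast hcast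
      omega
    have hA1 : P (Aset y0) = 1 := by
      refine le_antisymm prob_le_one ?_
      rw [← hP]
      exact measure_mono (Set.iInter_subset _ y0)
    have hAc0 : P ((Aset y0)ᶜ) = 0 := (prob_compl_eq_zero_iff (hmeasA y0)).mpr hA1
    have : (∏ t ∈ T, F (∑ j, t j)) * (1 - TAIL) ≤ 0 := by
      calc (∏ t ∈ T, F (∑ j, t j)) * (1 - TAIL)
          ≤ P (⋂ t, Ev0 t) := by rw [hPinter]; exact le_iInf hlowS
        _ ≤ P ((Aset y0)ᶜ) := measure_mono hsubcompl
        _ = 0 := hAc0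
    exact absurd (le_antisymm this (zero_le)) hc0.ne'
  · -- moment = ⊤ → P = 1
    intro hmom
    have hS : (∑' t : Fin n → ℕ, q (∑ j, t j)) = ⊤ :=
      (aux_moment_iff_Stot n hn w).mp hmom
    have hnull : ∀ y : Fin n → ℤ, P ((Aset y)ᶜ) = 0 := by
      intro y
      have hsub : ∀ S : Finset (Fin n → ℕ), (Aset y)ᶜ ⊆
          ⋂ t ∈ S, {ω | Y (fun j => y j - (t j : ℤ)) ω ≤ ∑ j, t j} := by
        intro S ω hω
        simp only [Set.mem_compl_iff, hAset, Set.mem_setOf_eq, not_exists] at hω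
        refine Set.mem_iInter₂.mpr fun t _ => ?_
        simp only [Set.mem_setOf_eq]
        by_contra hlt
        refine hω (fun j => y j - (t j : ℤ)) ⟨fun j => sub_le_self _ (Int.natCast_nonneg _), ?_⟩
        have harith : (∑ j, (y j - (y j - (t j : ℤ)))) = ((∑ j, t j : ℕ) : ℤ) := by
          simp only [sub_sub_cancel]
          exact (Nat.cast_sum _ _).symm
        rw [harith]
        exact_mod_cast Nat.lt_of_not_le hlt
      have hbound : ∀ S : Finset (Fin n → ℕ),
          P ((Aset y)ᶜ) * (1 + ∑ t ∈ S, q (∑ j, t j)) ≤ 1 := by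
        intro S
        calc P ((Aset y)ᶜ) * (1 + ∑ t ∈ S, q (∑ j, t j))
            ≤ (∏ t ∈ S, F (∑ j, t j)) * ∏ t ∈ S, (1 + q (∑ j, t j)) :=
              mul_le_mul' ((measure_mono (hsub S)).trans (le_of_eq (hprod y S)))
                (aux_one_add_sum_le_prod S _)
          _ = ∏ t ∈ S, (F (∑ j, t j) * (1 + q (∑ j, t j))) := (Finset.prod_mul_distrib).symm
          _ ≤ 1 := Finset.prod_le_one (fun _ _ => zero_le)
                (fun t _ => by rw [hFq' (∑ j, t j)]; exact aux_one_sub_mul_one_add _ (hq_le _))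
      by_contra hp0
      have hsup : (⨆ S : Finset (Fin n → ℕ), ∑ t ∈ S, q (∑ j, t j)) = ⊤ := by
        rw [← ENNReal.tsum_eq_iSup_sum]
        exact hS
      have h2 : 2 / P ((Aset y)ᶜ) < ⨆ S : Finset (Fin n → ℕ), ∑ t ∈ S, q (∑ j, t j) := by
        rw [hsup]
        exact ENNReal.div_lt_top (by norm_num) hp0
      obtain ⟨S, hS2⟩ := lt_iSup_iff.mp h2
      have hple : P ((Aset y)ᶜ) ≠ ⊤ := measure_ne_top P _
      have hcontr : (2 : ℝ≥0∞) ≤ 1 := by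
        calc (2 : ℝ≥0∞) = P ((Aset y)ᶜ) * (2 / P ((Aset y)ᶜ)) :=
              (ENNReal.mul_div_cancel hp0 hple).symm
          _ ≤ P ((Aset y)ᶜ) * (1 + ∑ t ∈ S, q (∑ j, t j)) :=
              mul_le_mul' le_rfl (hS2.le.trans le_add_self)
          _ ≤ 1 := hbound S
      norm_num at hcontr
    rw [← prob_compl_eq_zero_iff (MeasurableSet.iInter fun y => hmeasA y)]
    rw [Set.compl_iInter]
    exact measure_iUnion_null fun y => hnull y
end

section
/- Let μ be a probability vector on ℕ₀ with μ₀ ∈ (0,1) and consider the Boolean percolation model on the directed graph ℕ₀ (edges (x, x+1)). Then the number of uncovered vertices #V_μ^c(ℕ₀) is finite almost surely if and only if ∑_{m≥0} ∏_{k=1}^{m} ∑_{l=0}^{k−1} μ_l < ∞. -/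
open MeasureTheory ProbabilityTheory
open scoped ENNReal

open Filter

noncomputable def bpF (μ : ℕ → ℝ) (j : ℕ) : ℝ := ∑ l ∈ Finset.range (j + 1), μ l

noncomputable def bpA (μ : ℕ → ℝ) (n : ℕ) : ℝ := ∏ j ∈ Finset.range n, bpF μ j

lemma bpA_eq (μ : ℕ → ℝ) (m : ℕ) :
    (∏ k ∈ Finset.Icc 1 m, ∑ l ∈ Finset.range k, μ l) = bpA μ m := by
  induction m with
  | zero => simp [bpA]
  | succ m ih =>
    rw [Finset.prod_Icc_succ_top (Nat.succ_le_succ (Nat.zero_le m)), ih]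
    simp [bpA, bpF, Finset.prod_range_succ]

section Real

variable {μ : ℕ → ℝ}

lemma bp_summable (hsum : ∑' n, μ n = 1) : Summable μ := by
  by_contra h
  rw [tsum_eq_zero_of_not_summable h] at hsum
  norm_num at hsum

lemma bpF_nonneg (hnn : ∀ n, 0 ≤ μ n) (j : ℕ) : 0 ≤ bpF μ j :=
  Finset.sum_nonneg fun i _ => hnn i

lemma bpF_pos (hnn : ∀ n, 0 ≤ μ n) (h0 : 0 < μ 0) (j : ℕ) : 0 < bpF μ j :=
  lt_of_lt_of_le h0 (Finset.single_le_sum (fun i _ => hnn i) (Finset.mem_range.2 (Nat.succ_pos j)))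

lemma bpF_le_one (hnn : ∀ n, 0 ≤ μ n) (hsum : ∑' n, μ n = 1) (j : ℕ) : bpF μ j ≤ 1 := by
  rw [← hsum]
  exact Summable.sum_le_tsum _ (fun i _ => hnn i) (bp_summable hsum)

lemma bpA_nonneg (hnn : ∀ n, 0 ≤ μ n) (n : ℕ) : 0 ≤ bpA μ n :=
  Finset.prod_nonneg fun i _ => bpF_nonneg hnn i

lemma bpA_pos (hnn : ∀ n, 0 ≤ μ n) (h0 : 0 < μ 0) (n : ℕ) : 0 < bpA μ n :=
  Finset.prod_pos fun i _ => bpF_pos hnn h0 i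

lemma bpA_zero (μ : ℕ → ℝ) : bpA μ 0 = 1 := by simp [bpA]

lemma ofReal_bpA (hnn : ∀ n, 0 ≤ μ n) (n : ℕ) :
    ENNReal.ofReal (bpA μ n) = ∏ j ∈ Finset.range n, ENNReal.ofReal (bpF μ j) := by
  induction n with
  | zero => simp [bpA]
  | succ n ih =>
    rw [Finset.prod_range_succ, ← ih, bpA, Finset.prod_range_succ,
      show (∏ x ∈ Finset.range n, bpF μ x) = bpA μ n from rfl,
      ENNReal.ofReal_mul (bpA_nonneg hnn n)]

end Real
section Prob

variable {Ω : Type*} [MeasurableSpace Ω] {P : Measure Ω} [IsProbabilityMeasure P]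
  {μ : ℕ → ℝ} {Y : ℕ → Ω → ℕ}

lemma bp_meas_Iic (hnn : ∀ n, 0 ≤ μ n) (hYmeas : ∀ x, Measurable (Y x))
    (hYdist : ∀ x k, P {ω | Y x ω = k} = ENNReal.ofReal (μ k)) (x c : ℕ) :
    P (Y x ⁻¹' Set.Iic c) = ENNReal.ofReal (bpF μ c) := by
  have h1 : Y x ⁻¹' Set.Iic c = ⋃ l ∈ Finset.range (c + 1), Y x ⁻¹' {l} := by
    ext ω
    simp [Nat.lt_succ_iff]
  rw [h1, measure_biUnion_finset
      (fun i _ j _ hij => (Set.disjoint_singleton.mpr hij).preimage _)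
      (fun l _ => (hYmeas x) (measurableSet_singleton l))]
  rw [show (bpF μ c) = ∑ l ∈ Finset.range (c+1), μ l from rfl,
    ENNReal.ofReal_sum_of_nonneg (fun i _ => hnn i)]
  exact Finset.sum_congr rfl fun l _ => hYdist x l

lemma bp_meas_iInter (hnn : ∀ n, 0 ≤ μ n) (hYmeas : ∀ x, Measurable (Y x))
    (hYindep : iIndepFun Y P)
    (hYdist : ∀ x k, P {ω | Y x ω = k} = ENNReal.ofReal (μ k)) (c : ℕ → ℕ) (n : ℕ) :
    P (⋂ k ∈ Finset.range n, Y k ⁻¹' Set.Iic (c k))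
      = ∏ k ∈ Finset.range n, ENNReal.ofReal (bpF μ (c k)) := by
  rw [hYindep.measure_inter_preimage_eq_mul (Finset.range n)
      (sets := fun k => Set.Iic (c k)) (fun i _ => measurableSet_Iic)]
  exact Finset.prod_congr rfl fun k _ => bp_meas_Iic hnn hYmeas hYdist k (c k)

end Prob

def bpE {Ω : Type*} (Y : ℕ → Ω → ℕ) (m : ℕ) : Set Ω :=
  ⋂ k ∈ Finset.range (m + 1), Y k ⁻¹' Set.Iic (m - k)

section Prob2

variable {Ω : Type*} [MeasurableSpace Ω] {P : Measure Ω} [IsProbabilityMeasure P]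
  {μ : ℕ → ℝ} {Y : ℕ → Ω → ℕ}

lemma bpE_meas (hYmeas : ∀ x, Measurable (Y x)) (m : ℕ) : MeasurableSet (bpE Y m) :=
  Finset.measurableSet_biInter _ fun k _ => (hYmeas k) measurableSet_Iic

lemma bp_meas_bpE_inter (hnn : ∀ n, 0 ≤ μ n) (hYmeas : ∀ x, Measurable (Y x))
    (hYindep : iIndepFun Y P)
    (hYdist : ∀ x k, P {ω | Y x ω = k} = ENNReal.ofReal (μ k)) {m n : ℕ} (hm : m ≤ n) :
    P (bpE Y m ∩ bpE Y n)
      = ENNReal.ofReal (bpA μ (m + 1)) * ENNReal.ofReal (bpA μ (n - m)) := by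
  have hset : bpE Y m ∩ bpE Y n
      = ⋂ k ∈ Finset.range (n + 1), Y k ⁻¹' Set.Iic (if k ≤ m then m - k else n - k) := by
    ext ω
    simp only [bpE, Set.mem_inter_iff, Set.mem_iInter, Set.mem_preimage, Set.mem_Iic,
      Finset.mem_range, Nat.lt_succ_iff]
    constructor
    · rintro ⟨h1, h2⟩ k hk
      split_ifs with hkm
      · exact h1 k hkm
      · exact h2 k hk
    · intro h
      refine ⟨fun k hk => ?_, fun k hk => ?_⟩
      · have := h k (hk.trans hm); rwa [if_pos hk] at this
      · have := h k hk
        split_ifs at this with hkm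
        · exact this.trans (Nat.sub_le_sub_right hm k)
        · exact this
  rw [hset, bp_meas_iInter hnn hYmeas hYindep hYdist,
    show n + 1 = (m + 1) + (n - m) by omega, Finset.prod_range_add]
  congr 1
  · rw [ofReal_bpA hnn, ← Finset.prod_range_reflect (fun j => ENNReal.ofReal (bpF μ j)) (m + 1)]
    refine Finset.prod_congr rfl fun k hk => ?_
    rw [Finset.mem_range] at hk
    rw [show (if k ≤ m then m - k else n - k) = m + 1 - 1 - k by
      rw [if_pos (by omega : k ≤ m)]; omega]
  · rw [ofReal_bpA hnn, ← Finset.prod_range_reflect (fun j => ENNReal.ofReal (bpF μ j)) (n - m)]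
    refine Finset.prod_congr rfl fun k hk => ?_
    rw [Finset.mem_range] at hk
    rw [show (if m + 1 + k ≤ m then m - (m + 1 + k) else n - (m + 1 + k)) = n - m - 1 - k by
      rw [if_neg (by omega : ¬ (m + 1 + k ≤ m))]; omega]

lemma bp_meas_bpE (hnn : ∀ n, 0 ≤ μ n) (hYmeas : ∀ x, Measurable (Y x))
    (hYindep : iIndepFun Y P)
    (hYdist : ∀ x k, P {ω | Y x ω = k} = ENNReal.ofReal (μ k)) (m : ℕ) :
    P (bpE Y m) = ENNReal.ofReal (bpA μ (m + 1)) := by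
  have := bp_meas_bpE_inter hnn hYmeas hYindep hYdist (le_refl m)
  simpa [bpA_zero] using this

end Prob2
lemma bp_PZ {Ω : Type*} [MeasurableSpace Ω] (P : Measure Ω) (I : Finset ℕ) (A : ℕ → Set Ω)
    (hA : ∀ m, MeasurableSet (A m)) :
    (∑ m ∈ I, P (A m)) ^ 2 ≤ P (⋃ m ∈ I, A m) * ∑ m ∈ I, ∑ n ∈ I, P (A m ∩ A n) := by
  classical
  set N : Ω → ℝ≥0∞ := fun ω => ∑ m ∈ I, (A m).indicator 1 ω with hN
  have hNmeas : Measurable N :=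
    Finset.measurable_sum _ fun m _ => measurable_one.indicator (hA m)
  set U : Set Ω := ⋃ m ∈ I, A m with hU
  have hUmeas : MeasurableSet U := by
    exact MeasurableSet.biUnion I.countable_toSet fun m _ => hA m
  have hIndmeas : Measurable (U.indicator (1 : Ω → ℝ≥0∞)) :=
    measurable_one.indicator hUmeas
  have hsq : ∀ x : ℝ≥0∞, x ^ (2 : ℝ) = x * x := fun x => by
    rw [show (2 : ℝ) = ((2 : ℕ) : ℝ) by norm_num, ENNReal.rpow_natCast]; ring
  have h1 : ∫⁻ ω, N ω ∂P = ∑ m ∈ I, P (A m) := by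
    show ∫⁻ ω, ∑ m ∈ I, (A m).indicator 1 ω ∂P = _
    rw [lintegral_finset_sum _ fun m _ => measurable_one.indicator (hA m)]
    exact Finset.sum_congr rfl fun m _ => lintegral_indicator_one (hA m)
  have h2 : ∫⁻ ω, (N ω) ^ (2 : ℝ) ∂P = ∑ m ∈ I, ∑ n ∈ I, P (A m ∩ A n) := by
    have hpt : ∀ ω, (N ω) ^ (2 : ℝ)
        = ∑ m ∈ I, ∑ n ∈ I, ((A m ∩ A n).indicator (1 : Ω → ℝ≥0∞) ω) := by
      intro ω
      rw [hsq, hN, Finset.sum_mul_sum]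
      exact Finset.sum_congr rfl fun m _ => Finset.sum_congr rfl fun n _ =>
        (congrFun (Set.inter_indicator_one (s := A m) (t := A n)) ω).symm
    simp only [hpt]
    rw [lintegral_finset_sum _ fun m _ => Finset.measurable_sum _ fun n _ =>
      measurable_one.indicator ((hA m).inter (hA n))]
    refine Finset.sum_congr rfl fun m _ => ?_
    rw [lintegral_finset_sum _ fun n _ => measurable_one.indicator ((hA m).inter (hA n))]
    exact Finset.sum_congr rfl fun n _ => lintegral_indicator_one ((hA m).inter (hA n))
  have hNU : ∀ ω, N ω = N ω * U.indicator 1 ω := by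
    intro ω
    by_cases hω : ω ∈ U
    · rw [Set.indicator_of_mem hω, Pi.one_apply, mul_one]
    · have : N ω = 0 := by
        rw [hN]
        refine Finset.sum_eq_zero fun m hm => ?_
        refine Set.indicator_of_notMem (fun hmem => hω ?_) _
        exact Set.mem_biUnion hm hmem
      rw [this, zero_mul]
  have hconj : Real.HolderConjugate 2 2 := Real.HolderConjugate.two_two
  have hCS := ENNReal.lintegral_mul_le_Lp_mul_Lq P hconj hNmeas.aemeasurable
    hIndmeas.aemeasurable
  have hg2 : ∫⁻ ω, (U.indicator (1 : Ω → ℝ≥0∞) ω) ^ (2 : ℝ) ∂P = P U := by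
    have hpt2 : ∀ ω, (U.indicator (1 : Ω → ℝ≥0∞) ω) ^ (2 : ℝ) = U.indicator 1 ω := by
      intro ω
      by_cases hω : ω ∈ U <;>
        simp [Set.indicator_of_mem, Set.indicator_of_notMem, hω, hsq]
    simp only [hpt2]
    exact lintegral_indicator_one hUmeas
  have hmain : ∑ m ∈ I, P (A m)
      ≤ (∑ m ∈ I, ∑ n ∈ I, P (A m ∩ A n)) ^ (1 / 2 : ℝ) * (P U) ^ (1 / 2 : ℝ) := by
    rw [← h1, show (∫⁻ ω, N ω ∂P) = ∫⁻ ω, (N * U.indicator (1 : Ω → ℝ≥0∞)) ω ∂P from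
      lintegral_congr fun ω => hNU ω, ← h2, ← hg2]
    exact hCS
  calc (∑ m ∈ I, P (A m)) ^ 2
      ≤ ((∑ m ∈ I, ∑ n ∈ I, P (A m ∩ A n)) ^ (1 / 2 : ℝ) * (P U) ^ (1 / 2 : ℝ)) ^ 2 := by
        rw [sq, sq]; exact mul_le_mul' hmain hmain
    _ = P U * ∑ m ∈ I, ∑ n ∈ I, P (A m ∩ A n) := by
        rw [mul_pow, sq, sq, ← ENNReal.rpow_add_of_nonneg _ _ (by norm_num) (by norm_num),
          ← ENNReal.rpow_add_of_nonneg _ _ (by norm_num) (by norm_num)]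
        norm_num [mul_comm]
section Main

variable {Ω : Type*} [MeasurableSpace Ω] {P : Measure Ω} [IsProbabilityMeasure P]
  {μ : ℕ → ℝ} {Y : ℕ → Ω → ℕ}

lemma bp_limsup_pos (hnn : ∀ n, 0 ≤ μ n) (h0 : 0 < μ 0)
    (hYmeas : ∀ x, Measurable (Y x))
    (hYindep : iIndepFun Y P)
    (hYdist : ∀ x k, P {ω | Y x ω = k} = ENNReal.ofReal (μ k))
    (hns : ¬ Summable (bpA μ)) :
    (4 : ℝ≥0∞)⁻¹ ≤ P (Filter.limsup (bpE Y) Filter.atTop) := by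
  classical
  set α : ℕ → ℝ≥0∞ := fun d => ENNReal.ofReal (bpA μ d) with hα
  set G : ℕ → Set Ω := fun M => ⋃ i, bpE Y (i + M) with hG
  have hwin : ∀ M : ℕ, (4 : ℝ≥0∞)⁻¹ ≤ P (G M) := by
    intro M
    have htend : Filter.Tendsto (fun j => ∑ d ∈ Finset.range j, bpA μ d)
        Filter.atTop Filter.atTop :=
      (not_summable_iff_tendsto_nat_atTop_of_nonneg (fun n => bpA_nonneg hnn n)).1 hns
    obtain ⟨K, hK1, hK2⟩ : ∃ K, 2 * (∑ d ∈ Finset.range (M + 1), bpA μ d)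
        ≤ ∑ d ∈ Finset.range K, bpA μ d ∧ M + 1 ≤ K :=
      ((htend.eventually_ge_atTop _).and (Filter.eventually_ge_atTop (M + 1))).exists
    set I : Finset ℕ := Finset.Ico M (M + K) with hI
    set S : ℝ≥0∞ := ∑ m ∈ I, P (bpE Y m) with hS
    set D : ℝ≥0∞ := ∑ d ∈ Finset.range K, α d with hD
    have hEm : ∀ m, P (bpE Y m) = α (m + 1) := fun m =>
      bp_meas_bpE hnn hYmeas hYindep hYdist m
    have hSval : S = ENNReal.ofReal (∑ i ∈ Finset.range K, bpA μ (M + i + 1)) := by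
      rw [hS, ENNReal.ofReal_sum_of_nonneg (fun i _ => bpA_nonneg hnn _), hI,
        Finset.sum_Ico_eq_sum_range, show M + K - M = K by omega]
      exact Finset.sum_congr rfl fun i _ => hEm (M + i)
    have hDval : D = ENNReal.ofReal (∑ d ∈ Finset.range K, bpA μ d) := by
      rw [hD, ENNReal.ofReal_sum_of_nonneg (fun i _ => bpA_nonneg hnn _)]
    have hreal : ∑ d ∈ Finset.range K, bpA μ d
        ≤ 2 * ∑ i ∈ Finset.range K, bpA μ (M + i + 1) := by
      have h1 : ∑ d ∈ Finset.range K, bpA μ d - ∑ d ∈ Finset.range (M + 1), bpA μ d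
          = ∑ j ∈ Finset.Ico (M + 1) K, bpA μ j := (Finset.sum_Ico_eq_sub _ hK2).symm
      have h2 : ∑ j ∈ Finset.Ico (M + 1) K, bpA μ j
          ≤ ∑ i ∈ Finset.range K, bpA μ (M + i + 1) := by
        rw [Finset.sum_Ico_eq_sum_range]
        rw [Finset.sum_congr rfl fun i _ => (by rw [show M + 1 + i = M + i + 1 by omega] :
          bpA μ (M + 1 + i) = bpA μ (M + i + 1))]
        exact Finset.sum_le_sum_of_subset_of_nonneg
          (Finset.range_subset_range.2 (by omega)) (fun i _ _ => bpA_nonneg hnn _)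
      nlinarith [h1, h2]
    have hDS : D ≤ 2 * S := by
      rw [hDval, hSval, show ((2 : ℝ≥0∞)) = ENNReal.ofReal (2 : ℝ) by
        rw [ENNReal.ofReal_ofNat], ← ENNReal.ofReal_mul (by norm_num)]
      exact ENNReal.ofReal_le_ofReal hreal
    set Q : ℝ≥0∞ := ∑ m ∈ I, ∑ n ∈ I, P (bpE Y m ∩ bpE Y n) with hQdef
    set f : ℕ → ℕ → ℝ≥0∞ := fun m n => if m ≤ n then α (m + 1) * α (n - m) else 0 with hf
    have hpair : ∀ m n, P (bpE Y m ∩ bpE Y n) ≤ f m n + f n m := by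
      intro m n
      rcases le_total m n with h | h
      · have hfmn : f m n = α (m + 1) * α (n - m) := by
          simp only [hf]
          rw [if_pos h]
        calc P (bpE Y m ∩ bpE Y n) = f m n := by
              rw [hfmn]; exact bp_meas_bpE_inter hnn hYmeas hYindep hYdist h
          _ ≤ f m n + f n m := le_self_add
      · have hfnm : f n m = α (n + 1) * α (m - n) := by
          simp only [hf]
          rw [if_pos h]
        calc P (bpE Y m ∩ bpE Y n) = f n m := by
              rw [hfnm, Set.inter_comm]
              exact bp_meas_bpE_inter hnn hYmeas hYindep hYdist h
          _ ≤ f m n + f n m := le_add_self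
    have hfin : ∀ m ∈ I, ∑ n ∈ I, f m n ≤ α (m + 1) * D := by
      intro m hm
      rw [hI, Finset.mem_Ico] at hm
      have hfilter : I.filter (fun n => m ≤ n) = Finset.Ico m (M + K) := by
        ext n
        simp only [Finset.mem_filter, hI, Finset.mem_Ico]
        omega
      rw [hf]
      rw [← Finset.sum_filter, hfilter, Finset.sum_Ico_eq_sum_range]
      rw [Finset.sum_congr rfl fun i _ => (by rw [show m + i - m = i by omega] :
        α (m + 1) * α (m + i - m) = α (m + 1) * α i)]
      rw [← Finset.mul_sum]
      refine mul_le_mul_right ?_ _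
      rw [hD]
      exact Finset.sum_le_sum_of_subset (Finset.range_subset_range.2 (by omega))
    have hQ : Q ≤ 2 * (S * D) := by
      have h1 : Q ≤ ∑ m ∈ I, ∑ n ∈ I, (f m n + f n m) :=
        Finset.sum_le_sum fun m _ => Finset.sum_le_sum fun n _ => hpair m n
      have h2 : ∑ m ∈ I, ∑ n ∈ I, (f m n + f n m)
          = (∑ m ∈ I, ∑ n ∈ I, f m n) + ∑ m ∈ I, ∑ n ∈ I, f n m := by
        rw [← Finset.sum_add_distrib]
        exact Finset.sum_congr rfl fun m _ => Finset.sum_add_distrib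
      have h3 : ∑ m ∈ I, ∑ n ∈ I, f n m = ∑ m ∈ I, ∑ n ∈ I, f m n := Finset.sum_comm
      have h4 : ∑ m ∈ I, ∑ n ∈ I, f m n ≤ S * D := by
        calc ∑ m ∈ I, ∑ n ∈ I, f m n ≤ ∑ m ∈ I, α (m + 1) * D :=
            Finset.sum_le_sum hfin
          _ = (∑ m ∈ I, α (m + 1)) * D := by rw [Finset.sum_mul]
          _ = S * D := by
            congr 1
            rw [hS]
            exact (Finset.sum_congr rfl fun m _ => hEm m).symm
      calc Q ≤ _ := h1
        _ = 2 * (∑ m ∈ I, ∑ n ∈ I, f m n) := by rw [h2, h3, two_mul]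
        _ ≤ 2 * (S * D) := mul_le_mul_right h4 2
    have hPZ := bp_PZ P I (bpE Y) (bpE_meas hYmeas)
    have hchain : S ^ 2 ≤ S ^ 2 * (4 * P (⋃ m ∈ I, bpE Y m)) := by
      calc S ^ 2 ≤ P (⋃ m ∈ I, bpE Y m) * Q := hPZ
        _ ≤ P (⋃ m ∈ I, bpE Y m) * (2 * (S * D)) := mul_le_mul_right hQ _
        _ ≤ P (⋃ m ∈ I, bpE Y m) * (2 * (S * (2 * S))) :=
            mul_le_mul_right (mul_le_mul_right (mul_le_mul_right hDS _) _) _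
        _ = S ^ 2 * (4 * P (⋃ m ∈ I, bpE Y m)) := by ring
    have hSpos : 0 < ∑ i ∈ Finset.range K, bpA μ (M + i + 1) :=
      Finset.sum_pos (fun i _ => bpA_pos hnn h0 _) (Finset.nonempty_range_iff.2 (by omega))
    have hS0 : S ≠ 0 := by
      rw [hSval]
      exact (ENNReal.ofReal_pos.2 hSpos).ne'
    have hStop : S ≠ ⊤ := by rw [hSval]; exact ENNReal.ofReal_ne_top
    have h14 : 1 ≤ 4 * P (⋃ m ∈ I, bpE Y m) := by
      have h' : S ^ 2 * 1 ≤ S ^ 2 * (4 * P (⋃ m ∈ I, bpE Y m)) := by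
        rw [mul_one]; exact hchain
      exact (ENNReal.mul_le_mul_iff_right (pow_ne_zero 2 hS0) (ENNReal.pow_ne_top hStop)).1 h'
    have hU4 : (4 : ℝ≥0∞)⁻¹ ≤ P (⋃ m ∈ I, bpE Y m) := by
      calc (4 : ℝ≥0∞)⁻¹ = 4⁻¹ * 1 := (mul_one _).symm
        _ ≤ 4⁻¹ * (4 * P (⋃ m ∈ I, bpE Y m)) := mul_le_mul_right h14 _
        _ = P (⋃ m ∈ I, bpE Y m) := by
            rw [← mul_assoc, ENNReal.inv_mul_cancel (by norm_num) (by norm_num), one_mul]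
    refine hU4.trans (measure_mono (Set.iUnion₂_subset fun m hm => ?_))
    rw [hI, Finset.mem_Ico] at hm
    rw [hG, show m = (m - M) + M by omega]
    exact Set.subset_iUnion (fun j => bpE Y (j + M)) (m - M)
  have hlim : Filter.limsup (bpE Y) Filter.atTop = ⋂ M, G M := by
    rw [Filter.limsup_eq_iInf_iSup_of_nat']
    rfl
  have hGmeas : ∀ M, NullMeasurableSet (G M) P := fun M =>
    (MeasurableSet.iUnion fun i => bpE_meas hYmeas (i + M)).nullMeasurableSet
  have hGanti : Antitone G := by
    intro M M' hMM'
    refine Set.iUnion_subset fun i => ?_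
    rw [hG, show i + M' = (i + (M' - M)) + M by omega]
    exact Set.subset_iUnion (fun j => bpE Y (j + M)) (i + (M' - M))
  have htendsto := tendsto_measure_iInter_atTop hGmeas hGanti ⟨0, measure_ne_top P _⟩
  rw [hlim]
  exact ge_of_tendsto' htendsto hwin

lemma bp_limsup_zero (hnn : ∀ n, 0 ≤ μ n) (hYmeas : ∀ x, Measurable (Y x))
    (hYindep : iIndepFun Y P)
    (hYdist : ∀ x k, P {ω | Y x ω = k} = ENNReal.ofReal (μ k))
    (hs : Summable (bpA μ)) :
    P (Filter.limsup (bpE Y) Filter.atTop) = 0 := by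
  apply measure_limsup_atTop_eq_zero
  have : ∑' m, P (bpE Y m) = ENNReal.ofReal (∑' m, bpA μ (m + 1)) := by
    rw [ENNReal.ofReal_tsum_of_nonneg (fun n => bpA_nonneg hnn _)
      ((summable_nat_add_iff 1).2 hs)]
    exact tsum_congr fun m => bp_meas_bpE hnn hYmeas hYindep hYdist m
  rw [this]
  exact ENNReal.ofReal_ne_top

end Main
/-- For Boolean percolation on the directed graph `ℕ₀`
(edges `(x, x+1)`, so vertex `m` is covered iff `∃ k ≤ m, m - k < Y k`),
the set of uncovered vertices is finite almost surely iff
`∑_{m ≥ 0} ∏_{k=1}^{m} ∑_{l=0}^{k-1} μ l < ∞`. -/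
theorem boolean_percolation_N_finite_uncovered_iff_summable
    (μ : ℕ → ℝ) (hμnonneg : ∀ n, 0 ≤ μ n) (hμsum : ∑' n, μ n = 1)
    (hμ0pos : 0 < μ 0) (hμ0lt : μ 0 < 1)
    (Ω : Type*) [MeasurableSpace Ω] (P : Measure Ω) [IsProbabilityMeasure P]
    (Y : ℕ → Ω → ℕ) (hYmeas : ∀ x, Measurable (Y x))
    (hYindep : iIndepFun Y P)
    (hYdist : ∀ x k, P {ω | Y x ω = k} = ENNReal.ofReal (μ k)) :
    P {ω | {m : ℕ | ¬ ∃ k ≤ m, m - k < Y k ω}.Finite} = 1 ↔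
      Summable (fun m : ℕ => ∏ k ∈ Finset.Icc 1 m, ∑ l ∈ Finset.range k, μ l) := by
  have hEset : {ω | {m : ℕ | ¬ ∃ k ≤ m, m - k < Y k ω}.Finite}
      = (Filter.limsup (bpE Y) Filter.atTop)ᶜ := by
    ext ω
    have hpred : ∀ m : ℕ, (¬ ∃ k ≤ m, m - k < Y k ω) ↔ ω ∈ bpE Y m := by
      intro m
      simp [bpE, Set.mem_iInter, Nat.lt_succ_iff, not_lt]
    simp only [Set.mem_setOf_eq, Set.mem_compl_iff, mem_limsup_iff_frequently_mem]
    rw [show {m : ℕ | ¬ ∃ k ≤ m, m - k < Y k ω} = {m : ℕ | ω ∈ bpE Y m} from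
      Set.ext fun m => hpred m]
    rw [← Set.not_infinite, ← Nat.frequently_atTop_iff_infinite]
  rw [hEset, prob_compl_eq_one_iff (MeasurableSet.measurableSet_limsup fun n => bpE_meas hYmeas n)]
  rw [summable_congr fun m => bpA_eq μ m]
  constructor
  · intro hzero
    by_contra hns
    have hpos := bp_limsup_pos hμnonneg hμ0pos hYmeas hYindep hYdist hns
    rw [hzero] at hpos
    simp at hpos
  · exact bp_limsup_zero hμnonneg hYmeas hYindep hYdist
end

section
/- Let μ be a probability vector on ℕ₀ with μ₀ ∈ (0,1). If there exists n ∈ ℕ such that #V_μ^c(ℕ₀ⁿ) < ∞ almost surely, then for every n ∈ ℕ one has #V_μ^c(ℕ₀ⁿ) < ∞ almost surely. (Whether all but finitely many vertices of ℕ₀ⁿ are covered does not depend on the dimension n.) -/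
open MeasureTheory ProbabilityTheory Filter
open scoped ENNReal

namespace BP

noncomputable def F (μ : ℕ → ℝ) (c : ℕ) : ℝ := ∑ k ∈ Finset.range (c+1), μ k

noncomputable def pseq (μ : ℕ → ℝ) (m : ℕ) : ℝ := ∏ k ∈ Finset.range (m+1), F μ k
noncomputable def gseq (μ : ℕ → ℝ) (m : ℕ) : ℝ := ∏ k ∈ Finset.range m, F μ (k+1)

variable {μ : ℕ → ℝ}

lemma summable_mu (hμnonneg : ∀ n, 0 ≤ μ n) (hμsum : ∑' n, μ n = 1) : Summable μ := by
  by_contra hs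
  rw [tsum_eq_zero_of_not_summable hs] at hμsum
  norm_num at hμsum

lemma F_nonneg (hμnonneg : ∀ n, 0 ≤ μ n) (c : ℕ) : 0 ≤ F μ c :=
  Finset.sum_nonneg fun k _ => hμnonneg k

lemma F_le_one (hμnonneg : ∀ n, 0 ≤ μ n) (hμsum : ∑' n, μ n = 1) (c : ℕ) : F μ c ≤ 1 := by
  rw [← hμsum]
  exact Summable.sum_le_tsum _ (fun k _ => hμnonneg k) (summable_mu hμnonneg hμsum)

lemma pseq_nonneg (hμnonneg : ∀ n, 0 ≤ μ n) (m : ℕ) : 0 ≤ pseq μ m :=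
  Finset.prod_nonneg fun k _ => F_nonneg hμnonneg k

lemma gseq_nonneg (hμnonneg : ∀ n, 0 ≤ μ n) (m : ℕ) : 0 ≤ gseq μ m :=
  Finset.prod_nonneg fun k _ => F_nonneg hμnonneg _

lemma pseq_eq (m : ℕ) : pseq μ m = F μ 0 * gseq μ m := by
  rw [pseq, Finset.prod_range_succ', gseq, mul_comm]

lemma pseq_le_one (hμnonneg : ∀ n, 0 ≤ μ n) (hμsum : ∑' n, μ n = 1) (m : ℕ) : pseq μ m ≤ 1 :=
  Finset.prod_le_one (fun k _ => F_nonneg hμnonneg k) (fun k _ => F_le_one hμnonneg hμsum k)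



section Model
variable {n : ℕ} {Ω : Type} [MeasurableSpace Ω] {P : Measure Ω}
  {Y : (Fin n → ℕ) → Ω → ℕ}

def D (x y : Fin n → ℕ) : ℕ := ∑ j, (y j - x j)

def U (Y : (Fin n → ℕ) → Ω → ℕ) (y : Fin n → ℕ) : Set Ω :=
  {ω | ∀ x, (∀ j, x j ≤ y j) → Y x ω ≤ D x y}

lemma measure_le_eq (hμnonneg : ∀ k, 0 ≤ μ k)
    (hYm : ∀ x, Measurable (Y x)) (hYd : ∀ x k, P {ω | Y x ω = k} = ENNReal.ofReal (μ k))
    (x : Fin n → ℕ) (c : ℕ) :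
    P {ω | Y x ω ≤ c} = ENNReal.ofReal (F μ c) := by
  have : {ω | Y x ω ≤ c} = ⋃ k ∈ Finset.range (c+1), Y x ⁻¹' {k} := by
    ext ω
    simp [Nat.lt_succ_iff]
  rw [this, measure_biUnion_finset]
  · rw [F, ENNReal.ofReal_sum_of_nonneg (fun k _ => hμnonneg k)]
    refine Finset.sum_congr rfl fun k _ => ?_
    rw [← hYd x k]; rfl
  · intro i _ j _ hij
    simp only [Function.onFun]
    apply Set.disjoint_left.2
    intro ω hi hj
    exact hij (by simp at hi hj; rw [← hi, ← hj])
  · exact fun k _ => hYm x (measurableSet_singleton k)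

lemma measure_biInter_le_eq (hμnonneg : ∀ k, 0 ≤ μ k)
    (hYm : ∀ x, Measurable (Y x))
    (hYi : iIndepFun Y P)
    (hYd : ∀ x k, P {ω | Y x ω = k} = ENNReal.ofReal (μ k))
    (s : Finset (Fin n → ℕ)) (c : (Fin n → ℕ) → ℕ) :
    P (⋂ x ∈ s, {ω | Y x ω ≤ c x}) = ∏ x ∈ s, ENNReal.ofReal (F μ (c x)) := by
  have h1 := hYi.meas_biInter (S := s) (s := fun x => {ω | Y x ω ≤ c x})
    (fun x _ => ⟨Set.Iic (c x), trivial, rfl⟩)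
  rw [h1]
  exact Finset.prod_congr rfl fun x _ => measure_le_eq hμnonneg hYm hYd x (c x)

def box (y : Fin n → ℕ) : Finset (Fin n → ℕ) :=
  Fintype.piFinset (fun j => Finset.range (y j + 1))

lemma mem_box {y x : Fin n → ℕ} : x ∈ box y ↔ ∀ j, x j ≤ y j := by
  simp [box, Nat.lt_succ_iff]

lemma U_eq (Y : (Fin n → ℕ) → Ω → ℕ) (y : Fin n → ℕ) :
    U Y y = ⋂ x ∈ box y, {ω | Y x ω ≤ D x y} := by
  ext ω
  simp only [U, Set.mem_setOf_eq, Set.mem_iInter]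
  constructor
  · intro h x hx
    exact h x (mem_box.1 hx)
  · intro h x hx
    exact h x (mem_box.2 hx)

lemma measure_U (hμnonneg : ∀ k, 0 ≤ μ k)
    (hYm : ∀ x, Measurable (Y x))
    (hYi : iIndepFun Y P)
    (hYd : ∀ x k, P {ω | Y x ω = k} = ENNReal.ofReal (μ k))
    (y : Fin n → ℕ) :
    P (U Y y) = ∏ x ∈ box y, ENNReal.ofReal (F μ (D x y)) := by
  rw [U_eq, measure_biInter_le_eq hμnonneg hYm hYi hYd]


section Axis
variable (j0 : Fin n)

def mPt (j0 : Fin n) (m : ℕ) : Fin n → ℕ := fun j => if j = j0 then m else 0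

lemma mPt_inj : Function.Injective (mPt (n := n) j0) := by
  intro a b hab
  have := congrFun hab j0
  simpa [mPt] using this

lemma D_mPt (x : Fin n → ℕ) (m : ℕ) : D x (mPt j0 m) = m - x j0 := by
  rw [D]
  rw [show (fun j => mPt j0 m j - x j) = fun j => if j = j0 then m - x j0 else 0 by
    funext j; by_cases hj : j = j0 <;> simp [mPt, hj]]
  simp

lemma box_mPt (m : ℕ) :
    box (mPt (n := n) j0 m) = (Finset.range (m+1)).image (mPt j0) := by
  ext x
  simp only [mem_box, Finset.mem_image, Finset.mem_range, Nat.lt_succ_iff]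
  constructor
  · intro hx
    refine ⟨x j0, by simpa [mPt] using hx j0, ?_⟩
    funext j
    by_cases hj : j = j0
    · simp [mPt, hj]
    · have := hx j
      simp [mPt, hj] at this ⊢
      omega
  · rintro ⟨i, hi, rfl⟩ j
    by_cases hj : j = j0 <;> simp [mPt, hj, hi]

variable {P : Measure Ω} {Y : (Fin n → ℕ) → Ω → ℕ}

lemma prod_reflect_pseq (hμnonneg : ∀ k, 0 ≤ μ k) (m : ℕ) :
    ∏ i ∈ Finset.range (m+1), ENNReal.ofReal (F μ (m - i)) = ENNReal.ofReal (pseq μ m) := by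
  rw [pseq, ENNReal.ofReal_prod_of_nonneg (fun i _ => F_nonneg hμnonneg i)]
  rw [← Finset.prod_range_reflect (fun i => ENNReal.ofReal (F μ i)) (m+1)]
  exact Finset.prod_congr rfl fun i hi => by norm_num

lemma measure_U_axis (hμnonneg : ∀ k, 0 ≤ μ k) (hYm : ∀ x, Measurable (Y x))
    (hYi : iIndepFun Y P)
    (hYd : ∀ x k, P {ω | Y x ω = k} = ENNReal.ofReal (μ k))
    (m : ℕ) :
    P (U Y (mPt j0 m)) = ENNReal.ofReal (pseq μ m) := by
  rw [measure_U hμnonneg hYm hYi hYd, box_mPt,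
    Finset.prod_image (fun a _ b _ hab => mPt_inj j0 hab)]
  rw [← prod_reflect_pseq (μ := μ) hμnonneg m]
  refine Finset.prod_congr rfl fun i _ => ?_
  rw [D_mPt]
  simp [mPt]

lemma U_pair_eq (Y : (Fin n → ℕ) → Ω → ℕ) (m m' : ℕ) (hmm : m < m') :
    U Y (mPt j0 m) ∩ U Y (mPt j0 m') =
      ⋂ x ∈ box (mPt (n := n) j0 m'),
        {ω | Y x ω ≤ (if x j0 ≤ m then m - x j0 else m' - x j0)} := by
  ext ω
  simp only [U, Set.mem_inter_iff, Set.mem_setOf_eq, Set.mem_iInter]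
  constructor
  · rintro ⟨h1, h2⟩ x hx
    by_cases hc : x j0 ≤ m
    · have hxm : ∀ j, x j ≤ mPt j0 m j := by
        intro j; by_cases hj : j = j0
        · subst hj; simpa [mPt] using hc
        · have := mem_box.1 hx j; simp [mPt, hj] at this ⊢; omega
      have := h1 x hxm
      rw [D_mPt] at this
      simpa [hc] using this
    · have := h2 x (mem_box.1 hx)
      rw [D_mPt] at this
      simpa [hc] using this
  · intro h
    constructor
    · intro x hx
      have hx0 : x j0 ≤ m := by simpa [mPt] using hx j0
      have hx' : x ∈ box (mPt j0 m') := mem_box.2 (fun j => by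
        have := hx j; by_cases hj : j = j0
        · subst hj; simp [mPt] at this ⊢; omega
        · simpa [mPt, hj] using this)
      have := h x hx'
      rw [D_mPt]
      simpa [hx0] using this
    · intro x hx
      have hx' : x ∈ box (mPt j0 m') := mem_box.2 hx
      have := h x hx'
      rw [D_mPt]
      by_cases hc : x j0 ≤ m
      · simp [hc] at this; omega
      · simpa [hc] using this

lemma measure_U_pair (hμnonneg : ∀ k, 0 ≤ μ k) (hYm : ∀ x, Measurable (Y x))
    (hYi : iIndepFun Y P)
    (hYd : ∀ x k, P {ω | Y x ω = k} = ENNReal.ofReal (μ k))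
    (m m' : ℕ) (hmm : m < m') :
    P (U Y (mPt j0 m) ∩ U Y (mPt j0 m')) =
      ENNReal.ofReal (pseq μ m) * ENNReal.ofReal (pseq μ (m' - m - 1)) := by
  rw [U_pair_eq j0 Y m m' hmm,
    measure_biInter_le_eq hμnonneg hYm hYi hYd _
      (fun x => if x j0 ≤ m then m - x j0 else m' - x j0),
    box_mPt, Finset.prod_image (fun a _ b _ hab => mPt_inj j0 hab)]
  have hPt : ∀ i : ℕ, (mPt (n := n) j0 i) j0 = i := fun i => by simp [mPt]
  have hcongr : ∀ i ∈ Finset.range (m'+1),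
      ENNReal.ofReal (F μ (if (mPt (n := n) j0 i) j0 ≤ m then m - (mPt (n := n) j0 i) j0
        else m' - (mPt (n := n) j0 i) j0))
      = (fun i => ENNReal.ofReal (F μ (if i ≤ m then m - i else m' - i))) i := by
    intro i _; simp only [hPt]
  rw [Finset.prod_congr rfl hcongr]
  have hsplit : m' + 1 = (m+1) + (m' - m) := by omega
  rw [hsplit, Finset.prod_range_add]
  have h1 : ∏ i ∈ Finset.range (m+1),
      (fun i => ENNReal.ofReal (F μ (if i ≤ m then m - i else m' - i))) i
      = ENNReal.ofReal (pseq μ m) := by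
    rw [← prod_reflect_pseq (μ := μ) hμnonneg m]
    refine Finset.prod_congr rfl fun i hi => ?_
    have : i ≤ m := by simp [Nat.lt_succ_iff] at hi; omega
    simp [this]
  have h2 : ∏ i ∈ Finset.range (m' - m),
      (fun i => ENNReal.ofReal (F μ (if m + 1 + i ≤ m then m - (m+1+i) else m' - (m+1+i)))) i
      = ENNReal.ofReal (pseq μ (m' - m - 1)) := by
    rw [← prod_reflect_pseq (μ := μ) hμnonneg (m' - m - 1)]
    rw [show m' - m = (m' - m - 1) + 1 by omega]
    refine Finset.prod_congr rfl fun i hi => ?_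
    have h3 : ¬ (m + 1 + i ≤ m) := by omega
    have h4 : m' - (m + 1 + i) = m' - m - 1 - i := by omega
    simp [h3, h4]
  rw [h1, h2]

end Axis






def star (y : Fin n → ℕ) : Finset (Fin n → ℕ) :=
  insert y (Finset.univ.biUnion fun j : Fin n =>
    (Finset.range (y j)).image fun k => Function.update y j k)

lemma D_update (y : Fin n → ℕ) (j : Fin n) (k : ℕ) :
    D (Function.update y j k) y = y j - k := by
  rw [D]
  rw [show (fun i => y i - Function.update y j k i) = fun i => if i = j then y j - k else 0 by
    funext i; by_cases hi : i = j <;> simp [Function.update, hi]]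
  simp

lemma prod_reflect_gseq (hμnonneg : ∀ k, 0 ≤ μ k) (m : ℕ) :
    ∏ k ∈ Finset.range m, ENNReal.ofReal (F μ (m - k)) = ENNReal.ofReal (gseq μ m) := by
  rw [gseq, ENNReal.ofReal_prod_of_nonneg (fun i _ => F_nonneg hμnonneg _)]
  rw [← Finset.prod_range_reflect (fun i => ENNReal.ofReal (F μ (i+1))) m]
  refine Finset.prod_congr rfl fun i hi => ?_
  have him : i < m := Finset.mem_range.1 hi
  have : m - 1 - i + 1 = m - i := by omega
  rw [this]

lemma prod_star (hμnonneg : ∀ k, 0 ≤ μ k) (y : Fin n → ℕ) :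
    ∏ x ∈ star y, ENNReal.ofReal (F μ (D x y)) =
      ENNReal.ofReal (F μ 0) * ∏ j, ENNReal.ofReal (gseq μ (y j)) := by
  classical
  have hynotin : y ∉ Finset.univ.biUnion fun j : Fin n =>
      (Finset.range (y j)).image fun k => Function.update y j k := by
    simp only [Finset.mem_biUnion, Finset.mem_image, Finset.mem_range, Finset.mem_univ,
      true_and]
    rintro ⟨j, k, hk, hupd⟩
    have := congrFun hupd j
    simp [Function.update] at this
    omega
  rw [star, Finset.prod_insert hynotin]
  have hD0 : D y y = 0 := by simp [D]
  rw [hD0]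
  congr 1
  have hdisj : (↑(Finset.univ : Finset (Fin n)) : Set (Fin n)).PairwiseDisjoint
      (fun j => (Finset.range (y j)).image fun k => Function.update y j k) := by
    intro j _ j' _ hjj'
    simp only [Function.onFun]
    rw [Finset.disjoint_left]
    intro x hx hx'
    simp only [Finset.mem_image, Finset.mem_range] at hx hx'
    obtain ⟨k, hk, rfl⟩ := hx
    obtain ⟨k', hk', he⟩ := hx'
    have := congrFun he j
    simp [Function.update, hjj'] at this
    omega
  rw [Finset.prod_biUnion hdisj]
  refine Finset.prod_congr rfl fun j _ => ?_
  rw [Finset.prod_image (fun a ha b hb hab => by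
    have := congrFun hab j; simpa [Function.update] using this)]
  rw [← prod_reflect_gseq hμnonneg (y j)]
  refine Finset.prod_congr rfl fun k _ => ?_
  rw [D_update]


lemma star_subset_box (y : Fin n → ℕ) : star y ⊆ box (n := n) y := by
  intro x hx
  rw [star, Finset.mem_insert] at hx
  rcases hx with rfl | hx
  · exact mem_box.2 fun j => le_refl _
  · simp only [Finset.mem_biUnion, Finset.mem_image, Finset.mem_range, Finset.mem_univ,
      true_and] at hx
    obtain ⟨j, k, hk, rfl⟩ := hx
    refine mem_box.2 fun i => ?_
    by_cases hi : i = j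
    · subst hi; simp [Function.update]; omega
    · simp [Function.update, hi]

lemma measurableSet_U (hYm : ∀ x, Measurable (Y x)) (y : Fin n → ℕ) :
    MeasurableSet (U Y y) := by
  rw [U_eq]
  exact Finset.measurableSet_biInter _ fun x _ => hYm x measurableSet_Iic

lemma measure_U_le (hμnonneg : ∀ k, 0 ≤ μ k) (hμsum : ∑' k, μ k = 1)
    (hYm : ∀ x, Measurable (Y x))
    (hYi : iIndepFun Y P)
    (hYd : ∀ x k, P {ω | Y x ω = k} = ENNReal.ofReal (μ k))
    (y : Fin n → ℕ) :
    P (U Y y) ≤ ENNReal.ofReal (F μ 0) * ∏ j, ENNReal.ofReal (gseq μ (y j)) := by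
  rw [measure_U hμnonneg hYm hYi hYd, ← prod_star (μ := μ) hμnonneg y]
  have hsub := star_subset_box (n := n) y
  rw [← Finset.union_sdiff_of_subset hsub, Finset.prod_union Finset.sdiff_disjoint.symm]
  calc (∏ x ∈ star y, ENNReal.ofReal (F μ (D x y))) *
        ∏ x ∈ box y \ star y, ENNReal.ofReal (F μ (D x y))
      ≤ (∏ x ∈ star y, ENNReal.ofReal (F μ (D x y))) * 1 := by
        refine mul_le_mul_right (Finset.prod_le_one (fun _ _ => zero_le)
          (fun x _ => ENNReal.ofReal_le_one.2 (F_le_one hμnonneg hμsum _))) _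
    _ = ∏ x ∈ star y, ENNReal.ofReal (F μ (D x y)) := mul_one _

end Model
section PZ
variable {Ω : Type} [MeasurableSpace Ω] {P : Measure Ω}

lemma rpow_half_sq (x : ℝ≥0∞) : (x ^ (1/2 : ℝ)) ^ (2 : ℕ) = x := by
  rw [← ENNReal.rpow_natCast (x ^ (1/2 : ℝ)) 2, ← ENNReal.rpow_mul]
  norm_num

lemma indicator_mul_indicator (A B : Set Ω) (ω : Ω) :
    (A.indicator (1 : Ω → ℝ≥0∞) ω) * (B.indicator 1 ω) = (A ∩ B).indicator 1 ω := by
  by_cases hA : ω ∈ A <;> by_cases hB : ω ∈ B <;>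
    simp [Set.indicator_of_mem, Set.indicator_of_notMem, hA, hB, Set.mem_inter_iff]

lemma paley_zygmund (I : Finset ℕ) (U : ℕ → Set Ω) (hU : ∀ m, MeasurableSet (U m)) :
    (∑ m ∈ I, P (U m)) ^ 2 ≤
      (∑ m ∈ I, ∑ m' ∈ I, P (U m ∩ U m')) * P (⋃ m ∈ I, U m) := by
  classical
  set X : Ω → ℝ≥0∞ := fun ω => ∑ m ∈ I, (U m).indicator 1 ω with hX
  set V : Set Ω := ⋃ m ∈ I, U m with hV
  have hVmeas : MeasurableSet V := MeasurableSet.biUnion I.countable_toSet (fun m _ => hU m)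
  have hXmeas : Measurable X :=
    Finset.measurable_sum I (fun m _ => Measurable.indicator measurable_const (hU m))
  have hT : ∫⁻ ω, X ω ∂P = ∑ m ∈ I, P (U m) := by
    simp only [hX]
    rw [lintegral_finset_sum (f := fun m => (U m).indicator 1) I
      (fun m _ => Measurable.indicator measurable_const (hU m))]
    refine Finset.sum_congr rfl fun m _ => ?_
    rw [lintegral_indicator (hU m)]
    simp
  have hD : ∫⁻ ω, (X ω) ^ (2:ℕ) ∂P = ∑ m ∈ I, ∑ m' ∈ I, P (U m ∩ U m') := by
    have hXsq : ∀ ω, (X ω) ^ (2:ℕ) = ∑ m ∈ I, ∑ m' ∈ I, (U m ∩ U m').indicator 1 ω := by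
      intro ω
      rw [sq, hX, Finset.sum_mul_sum]
      exact Finset.sum_congr rfl fun m _ => Finset.sum_congr rfl fun m' _ =>
        indicator_mul_indicator _ _ _
    simp only [hXsq]
    rw [lintegral_finset_sum (f := fun m ω => ∑ m' ∈ I, (U m ∩ U m').indicator 1 ω) I
      (fun m _ => Finset.measurable_sum I
        (fun m' _ => Measurable.indicator measurable_const ((hU m).inter (hU m'))))]
    refine Finset.sum_congr rfl fun m _ => ?_
    rw [lintegral_finset_sum (f := fun m' => (U m ∩ U m').indicator 1) I
      (fun m' _ => Measurable.indicator measurable_const ((hU m).inter (hU m')))]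
    refine Finset.sum_congr rfl fun m' _ => ?_
    rw [lintegral_indicator ((hU m).inter (hU m'))]
    simp
  have hX1 : ∀ ω, X ω = X ω * V.indicator 1 ω := by
    intro ω
    by_cases hω : ω ∈ V
    · simp [Set.indicator_of_mem hω]
    · have : ∀ m ∈ I, ω ∉ U m := by
        intro m hm hmem
        exact hω (Set.mem_biUnion hm hmem)
      simp [hX, Set.indicator_of_notMem hω,
        Finset.sum_eq_zero fun m hm => Set.indicator_of_notMem (this m hm) _]
  have hpq : Real.HolderConjugate 2 2 := Real.HolderConjugate.two_two
  have hCS := ENNReal.lintegral_mul_le_Lp_mul_Lq (f := X) (g := V.indicator (1 : Ω → ℝ≥0∞))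
    P hpq hXmeas.aemeasurable
    ((Measurable.indicator (f := (1 : Ω → ℝ≥0∞)) measurable_const hVmeas).aemeasurable)
  have hL : ∫⁻ ω, (X * V.indicator (1 : Ω → ℝ≥0∞)) ω ∂P = ∑ m ∈ I, P (U m) := by
    rw [← hT]
    exact lintegral_congr fun ω => (hX1 ω).symm
  have hR1 : ∫⁻ ω, X ω ^ (2:ℝ) ∂P = ∑ m ∈ I, ∑ m' ∈ I, P (U m ∩ U m') := by
    rw [← hD]
    refine lintegral_congr fun ω => ?_
    rw [← ENNReal.rpow_natCast (X ω) 2]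
    norm_num
  have hR2 : ∫⁻ ω, (V.indicator (1 : Ω → ℝ≥0∞) ω) ^ (2:ℝ) ∂P = P V := by
    have : ∀ ω, (V.indicator (1 : Ω → ℝ≥0∞) ω) ^ (2:ℝ) = V.indicator 1 ω := by
      intro ω
      by_cases hω : ω ∈ V <;>
        simp [Set.indicator_of_mem, Set.indicator_of_notMem, hω,
          ENNReal.zero_rpow_of_pos (by norm_num : (0:ℝ) < 2)]
    simp only [this]
    rw [lintegral_indicator hVmeas]
    simp
  rw [hL, hR1, hR2] at hCS
  calc (∑ m ∈ I, P (U m)) ^ 2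
      ≤ ((∑ m ∈ I, ∑ m' ∈ I, P (U m ∩ U m')) ^ (1/2:ℝ) * P V ^ (1/2:ℝ)) ^ (2:ℕ) :=
        pow_le_pow_left' hCS 2
    _ = (∑ m ∈ I, ∑ m' ∈ I, P (U m ∩ U m')) * P V := by
        rw [mul_pow, rpow_half_sq, rpow_half_sq]
end PZ

lemma tsum_prod_pow (a : ℕ → ℝ≥0∞) : ∀ N : ℕ, ∑' y : Fin N → ℕ, ∏ j, a (y j) = (∑' m, a m) ^ N := by
  intro N
  induction N with
  | zero =>
    rw [tsum_eq_single (fun x : Fin 0 => x.elim0)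
      (fun b hb => absurd (Subsingleton.elim b _) hb)]
    simp
  | succ N ih =>
    rw [← (Fin.consEquiv (fun _ : Fin (N+1) => ℕ)).tsum_eq, ENNReal.tsum_prod']
    have hpt : ∀ (m : ℕ) (z : Fin N → ℕ),
        ∏ j : Fin (N+1), a (((Fin.consEquiv (fun _ : Fin (N+1) => ℕ)) (m, z)) j)
          = a m * ∏ j : Fin N, a (z j) := by
      intro m z
      rw [Fin.prod_univ_succ]
      simp [Fin.consEquiv]
    simp only [hpt]
    rw [show ∑' (m : ℕ) (z : Fin N → ℕ), a m * ∏ j, a (z j)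
        = ∑' (m : ℕ), a m * ∑' (z : Fin N → ℕ), ∏ j, a (z j) by
      exact tsum_congr fun m => ENNReal.tsum_mul_left]
    rw [ENNReal.tsum_mul_right, ih, pow_succ, mul_comm]

section Hard
variable {μ : ℕ → ℝ} {n : ℕ} {Ω : Type} [MeasurableSpace Ω] {P : Measure Ω}
  {Y : (Fin n → ℕ) → Ω → ℕ}

lemma uncovered_set_eq (Y : (Fin n → ℕ) → Ω → ℕ) (ω : Ω) :
    {y : Fin n → ℕ | ¬ ∃ x : Fin n → ℕ,
      (∀ j, x j ≤ y j) ∧ (∑ j, (y j - x j)) < Y x ω} = {y | ω ∈ U Y y} := by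
  ext y
  simp only [Set.mem_setOf_eq, U, D]
  push_neg
  rfl

lemma summable_pseq (hμnonneg : ∀ k, 0 ≤ μ k) (hμsum : ∑' k, μ k = 1) (hn : 1 ≤ n)
    [IsProbabilityMeasure P]
    (hYm : ∀ x, Measurable (Y x))
    (hYi : iIndepFun Y P)
    (hYd : ∀ x k, P {ω | Y x ω = k} = ENNReal.ofReal (μ k))
    (hfin : P {ω | {y : Fin n → ℕ | ¬ ∃ x : Fin n → ℕ,
      (∀ j, x j ≤ y j) ∧ (∑ j, (y j - x j)) < Y x ω}.Finite} = 1) :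
    Summable (pseq μ) := by
  classical
  by_contra hns
  set j0 : Fin n := ⟨0, hn⟩ with hj0
  have hUmeas : ∀ y, MeasurableSet (U Y y) := measurableSet_U hYm
  set E : Set Ω := {ω | {y : Fin n → ℕ | ω ∈ U Y y}.Finite} with hE
  have hPE : P E = 1 := by
    rw [← hfin]
    congr 1
    ext ω
    simp only [Set.mem_setOf_eq, hE]
    rw [uncovered_set_eq Y ω]
  have hEmeas : MeasurableSet E := by
    have hrep : E = ⋃ t : Finset (Fin n → ℕ), ⋂ y ∈ {y : Fin n → ℕ | y ∉ t}, (U Y y)ᶜ := by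
      ext ω
      simp only [hE, Set.mem_setOf_eq, Set.mem_iUnion, Set.mem_iInter, Set.mem_compl_iff]
      constructor
      · intro hf
        exact ⟨hf.toFinset, fun y hy hmem => hy (by simpa using hmem)⟩
      · rintro ⟨t, ht⟩
        refine Set.Finite.subset t.finite_toSet ?_
        intro y hy
        by_contra hyt
        exact ht y hyt hy
    rw [hrep]
    exact MeasurableSet.iUnion fun t =>
      MeasurableSet.biInter (Set.to_countable _) fun y _ => (hUmeas y).compl
  have hPEc : P Eᶜ = 0 := by
    rw [measure_compl hEmeas (measure_ne_top P E), hPE, measure_univ, tsub_self]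
  have hpos : ∀ m, 0 ≤ pseq μ m := pseq_nonneg hμnonneg
  have hdiv : Tendsto (fun N => ∑ m ∈ Finset.range N, pseq μ m) atTop atTop :=
    (not_summable_iff_tendsto_nat_atTop_of_nonneg hpos).1 hns
  set W : ℕ → Set Ω := fun k => ⋃ m ∈ Set.Ici k, U Y (mPt j0 m) with hWdef
  have hW_ge : ∀ k, (1:ℝ≥0∞)/4 ≤ P (W k) := by
    intro k
    set C := ∑ m ∈ Finset.range k, pseq μ m with hC
    have hC0 : 0 ≤ C := Finset.sum_nonneg fun m _ => hpos m
    obtain ⟨N, hkN, hSN⟩ : ∃ N, k ≤ N ∧ 1 + 3*C ≤ ∑ m ∈ Finset.range N, pseq μ m := by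
      obtain ⟨N0, hN0⟩ := (tendsto_atTop.1 hdiv (1 + 3*C)).exists_forall_of_atTop
      exact ⟨max N0 k, le_max_right _ _, hN0 _ (le_max_left _ _)⟩
    set I := Finset.Ico k N with hI
    set T := ∑ m ∈ I, pseq μ m with hT
    have hCT : C + T = ∑ m ∈ Finset.range N, pseq μ m := by
      rw [hC, hT, hI, Finset.sum_range_add_sum_Ico _ hkN]
    have hT1 : 1 + 2*C ≤ T := by nlinarith [hSN, hCT]
    have hT0 : 0 ≤ T := Finset.sum_nonneg fun m _ => hpos m
    set S := ∑ m ∈ Finset.range N, pseq μ m with hS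
    -- Paley-Zygmund
    have hPZ := paley_zygmund (P := P) I (fun m => U Y (mPt j0 m))
      (fun m => hUmeas (mPt j0 m))
    have hTsum : ∑ m ∈ I, P (U Y (mPt j0 m)) = ENNReal.ofReal T := by
      rw [hT, ENNReal.ofReal_sum_of_nonneg (fun m _ => hpos m)]
      exact Finset.sum_congr rfl fun m _ => measure_U_axis j0 hμnonneg hYm hYi hYd m
    -- pairwise bound
    set B : ℕ → ℕ → ℝ≥0∞ := fun m m' =>
      if m < m' then ENNReal.ofReal (pseq μ m) * ENNReal.ofReal (pseq μ (m'-m-1))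
      else if m = m' then ENNReal.ofReal (pseq μ m) else 0 with hB
    have hQB : ∀ m m', P (U Y (mPt j0 m) ∩ U Y (mPt j0 m')) ≤ B m m' + B m' m := by
      intro m m'
      rcases lt_trichotomy m m' with hlt | heq | hgt
      · rw [measure_U_pair j0 hμnonneg hYm hYi hYd m m' hlt]
        calc ENNReal.ofReal (pseq μ m) * ENNReal.ofReal (pseq μ (m'-m-1)) = B m m' := by
              rw [hB]; simp [hlt]
          _ ≤ B m m' + B m' m := le_self_add
      · subst heq
        rw [Set.inter_self, measure_U_axis j0 hμnonneg hYm hYi hYd m]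
        calc ENNReal.ofReal (pseq μ m) = B m m := by rw [hB]; simp
          _ ≤ B m m + B m m := le_self_add
      · rw [Set.inter_comm, measure_U_pair j0 hμnonneg hYm hYi hYd m' m hgt]
        calc ENNReal.ofReal (pseq μ m') * ENNReal.ofReal (pseq μ (m-m'-1)) = B m' m := by
              rw [hB]; simp [hgt]
          _ ≤ B m m' + B m' m := le_add_self
    have hrow : ∀ m ∈ I, ∑ m' ∈ I, B m m' ≤
        ENNReal.ofReal (pseq μ m) * (1 + ENNReal.ofReal S) := by
      intro m hm
      rw [← Finset.add_sum_erase I _ hm]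
      have hBmm : B m m = ENNReal.ofReal (pseq μ m) := by rw [hB]; simp
      have herase : ∑ m' ∈ I.erase m, B m m' ≤ ENNReal.ofReal (pseq μ m) * ENNReal.ofReal S := by
        have hstep : ∑ m' ∈ I.erase m, B m m' ≤
            ∑ m' ∈ (I.erase m).filter (fun m' => m < m'),
              ENNReal.ofReal (pseq μ m) * ENNReal.ofReal (pseq μ (m'-m-1)) := by
          rw [← Finset.sum_filter_add_sum_filter_not (I.erase m) (fun m' => m < m') (B m)]
          have hzero : ∑ m' ∈ (I.erase m).filter (fun m' => ¬ m < m'), B m m' = 0 := by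
            refine Finset.sum_eq_zero fun m' hm' => ?_
            simp only [Finset.mem_filter, Finset.mem_erase] at hm'
            rw [hB]
            have h1 : ¬ m < m' := hm'.2
            have h2 : ¬ m = m' := fun hc => hm'.1.1 hc.symm
            simp [h1, h2]
          rw [hzero, add_zero]
          refine Finset.sum_le_sum fun m' hm' => ?_
          simp only [Finset.mem_filter] at hm'
          rw [hB]
          simp [hm'.2]
        refine hstep.trans ?_
        rw [← Finset.mul_sum]
        refine mul_le_mul_right ?_ _
        -- reindex by m' ↦ m' - m - 1 into range N
        have himg : ∑ m' ∈ (I.erase m).filter (fun m' => m < m'),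
            ENNReal.ofReal (pseq μ (m'-m-1)) =
            ∑ j ∈ ((I.erase m).filter (fun m' => m < m')).image (fun m' => m' - m - 1),
              ENNReal.ofReal (pseq μ j) := by
          rw [Finset.sum_image]
          intro a ha b hb hab
          simp only [Finset.mem_coe, Finset.mem_filter] at ha hb hab
          omega
        rw [himg]
        have hsubset : ((I.erase m).filter (fun m' => m < m')).image (fun m' => m' - m - 1)
            ⊆ Finset.range N := by
          intro j hj
          simp only [Finset.mem_image, Finset.mem_filter, Finset.mem_erase, hI,
            Finset.mem_Ico] at hj
          obtain ⟨m', ⟨⟨_, _, hm'N⟩, hmm'⟩, rfl⟩ := hj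
          simp only [Finset.mem_range]
          omega
        calc ∑ j ∈ ((I.erase m).filter (fun m' => m < m')).image (fun m' => m' - m - 1),
              ENNReal.ofReal (pseq μ j)
            ≤ ∑ j ∈ Finset.range N, ENNReal.ofReal (pseq μ j) :=
              Finset.sum_le_sum_of_subset hsubset
          _ = ENNReal.ofReal S := by
              rw [hS, ENNReal.ofReal_sum_of_nonneg (fun m _ => hpos m)]
      calc B m m + ∑ m' ∈ I.erase m, B m m'
          ≤ ENNReal.ofReal (pseq μ m) * 1 + ENNReal.ofReal (pseq μ m) * ENNReal.ofReal S := by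
            rw [hBmm, mul_one]
            exact add_le_add_right herase _
        _ = ENNReal.ofReal (pseq μ m) * (1 + ENNReal.ofReal S) := by rw [mul_add]
    have hDbound : ∑ m ∈ I, ∑ m' ∈ I, P (U Y (mPt j0 m) ∩ U Y (mPt j0 m')) ≤
        2 * (ENNReal.ofReal T * (1 + ENNReal.ofReal S)) := by
      calc ∑ m ∈ I, ∑ m' ∈ I, P (U Y (mPt j0 m) ∩ U Y (mPt j0 m'))
          ≤ ∑ m ∈ I, ∑ m' ∈ I, (B m m' + B m' m) :=
            Finset.sum_le_sum fun m _ => Finset.sum_le_sum fun m' _ => hQB m m'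
        _ = ∑ m ∈ I, ∑ m' ∈ I, B m m' + ∑ m ∈ I, ∑ m' ∈ I, B m' m := by
            rw [← Finset.sum_add_distrib]
            exact Finset.sum_congr rfl fun m _ => Finset.sum_add_distrib
        _ = 2 * ∑ m ∈ I, ∑ m' ∈ I, B m m' := by
            rw [Finset.sum_comm (s := I) (t := I) (f := fun m m' => B m' m), two_mul]
        _ ≤ 2 * ∑ m ∈ I, ENNReal.ofReal (pseq μ m) * (1 + ENNReal.ofReal S) := by
            exact mul_le_mul_right (Finset.sum_le_sum hrow) 2
        _ = 2 * (ENNReal.ofReal T * (1 + ENNReal.ofReal S)) := by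
            rw [← Finset.sum_mul, ← ENNReal.ofReal_sum_of_nonneg (fun m _ => hpos m), ← hT]
    have hVsub : (⋃ m ∈ I, U Y (mPt j0 m)) ⊆ W k := by
      refine Set.iUnion₂_subset fun m hm => ?_
      have hkm : k ≤ m := (Finset.mem_Ico.1 hm).1
      exact Set.subset_biUnion_of_mem (u := fun m => U Y (mPt j0 m)) (show m ∈ Set.Ici k from hkm)
    have hS0 : 0 ≤ S := Finset.sum_nonneg fun m _ => hpos m
    have h1S : (1:ℝ≥0∞) + ENNReal.ofReal S ≤ ENNReal.ofReal (2*T) := by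
      rw [← ENNReal.ofReal_one, ← ENNReal.ofReal_add zero_le_one hS0]
      refine ENNReal.ofReal_le_ofReal ?_
      have : S = C + T := hCT.symm
      nlinarith
    have hchain : ENNReal.ofReal T * ENNReal.ofReal T ≤
        ENNReal.ofReal T * (4 * ENNReal.ofReal T * P (W k)) := by
      calc ENNReal.ofReal T * ENNReal.ofReal T = (∑ m ∈ I, P (U Y (mPt j0 m)))^2 := by
            rw [hTsum, sq]
        _ ≤ (∑ m ∈ I, ∑ m' ∈ I, P (U Y (mPt j0 m) ∩ U Y (mPt j0 m'))) *
              P (⋃ m ∈ I, U Y (mPt j0 m)) := hPZ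
        _ ≤ (2 * (ENNReal.ofReal T * (1 + ENNReal.ofReal S))) * P (W k) :=
            mul_le_mul' hDbound (measure_mono hVsub)
        _ = ENNReal.ofReal T * (2 * (1 + ENNReal.ofReal S) * P (W k)) := by ring
        _ ≤ ENNReal.ofReal T * (4 * ENNReal.ofReal T * P (W k)) := by
            refine mul_le_mul_right (mul_le_mul_left ?_ _) _
            calc 2 * (1 + ENNReal.ofReal S) ≤ 2 * ENNReal.ofReal (2*T) :=
                  mul_le_mul_right h1S 2
              _ = 4 * ENNReal.ofReal T := by
                  rw [ENNReal.ofReal_mul (by norm_num : (0:ℝ) ≤ 2)]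
                  rw [ENNReal.ofReal_ofNat]
                  ring
    have hTne0 : ENNReal.ofReal T ≠ 0 := by
      rw [ne_eq, ENNReal.ofReal_eq_zero, not_le]
      nlinarith
    have hcancel := (ENNReal.mul_le_mul_iff_right hTne0 ENNReal.ofReal_ne_top).1 hchain
    have hcancel2 : (1:ℝ≥0∞) ≤ 4 * P (W k) := by
      have hstep : ENNReal.ofReal T * 1 ≤ ENNReal.ofReal T * (4 * P (W k)) := by
        rw [mul_one]
        calc ENNReal.ofReal T ≤ 4 * ENNReal.ofReal T * P (W k) := hcancel
          _ = ENNReal.ofReal T * (4 * P (W k)) := by ring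
      exact (ENNReal.mul_le_mul_iff_right hTne0 ENNReal.ofReal_ne_top).1 hstep
    calc (1:ℝ≥0∞)/4 ≤ (4 * P (W k))/4 := by gcongr
      _ = P (W k) := by
          rw [mul_comm, mul_div_assoc, ENNReal.div_self (by norm_num) (by norm_num), mul_one]
  have hWmeas : ∀ k, MeasurableSet (W k) :=
    fun k => MeasurableSet.biUnion (Set.to_countable _) fun m _ => hUmeas _
  have hanti : Antitone W := by
    intro k k' hkk'
    refine Set.iUnion₂_subset fun m hm => ?_
    exact Set.subset_biUnion_of_mem (u := fun m => U Y (mPt j0 m)) (show m ∈ Set.Ici k from le_trans hkk' hm)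
  have htend := tendsto_measure_iInter_atTop (μ := P) (s := W)
    (fun k => (hWmeas k).nullMeasurableSet) hanti ⟨0, measure_ne_top _ _⟩
  have hPiInter : (1:ℝ≥0∞)/4 ≤ P (⋂ k, W k) :=
    ge_of_tendsto htend (Filter.Eventually.of_forall hW_ge)
  have hsub : (⋂ k, W k) ⊆ Eᶜ := by
    intro ω hω
    simp only [Set.mem_iInter, hWdef, Set.mem_iUnion, Set.mem_Ici, exists_prop] at hω
    simp only [Set.mem_compl_iff, hE, Set.mem_setOf_eq]
    intro hωE
    have hMfin : {m : ℕ | ω ∈ U Y (mPt j0 m)}.Finite := by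
      have himg : (fun m => mPt (n := n) j0 m) '' {m | ω ∈ U Y (mPt j0 m)}
          ⊆ {y | ω ∈ U Y y} := by
        rintro y ⟨m, hm, rfl⟩
        exact hm
      exact Set.Finite.of_finite_image (hωE.subset himg) (mPt_inj j0).injOn
    obtain ⟨b, hb⟩ := hMfin.bddAbove
    obtain ⟨m, hm, hmem⟩ := hω (b+1)
    have := hb hmem
    omega
  have hfinal : (1:ℝ≥0∞)/4 ≤ 0 := hPiInter.trans (hPEc ▸ measure_mono hsub)
  simp at hfinal

end Hard

section Conclude
variable {μ : ℕ → ℝ} {n : ℕ} {Ω : Type} [MeasurableSpace Ω] {P : Measure Ω}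
  {Y : (Fin n → ℕ) → Ω → ℕ}

lemma summable_gseq (hμ0pos : 0 < μ 0) (hs : Summable (pseq μ)) :
    Summable (gseq μ) := by
  have h0 : F μ 0 = μ 0 := by simp [F]
  have hne : F μ 0 ≠ 0 := by rw [h0]; exact ne_of_gt hμ0pos
  have h2 := hs.mul_left (F μ 0)⁻¹
  have : gseq μ = fun m => (F μ 0)⁻¹ * pseq μ m := by
    funext m
    rw [pseq_eq, ← mul_assoc, inv_mul_cancel₀ hne, one_mul]
  rw [this]
  exact h2

lemma conclusion_of_summable (hμnonneg : ∀ k, 0 ≤ μ k) (hμsum : ∑' k, μ k = 1)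
    (hμ0pos : 0 < μ 0) (hsum : Summable (pseq μ))
    [IsProbabilityMeasure P]
    (hYm : ∀ x, Measurable (Y x))
    (hYi : iIndepFun Y P)
    (hYd : ∀ x k, P {ω | Y x ω = k} = ENNReal.ofReal (μ k)) :
    P {ω | {y : Fin n → ℕ | ¬ ∃ x : Fin n → ℕ,
      (∀ j, x j ≤ y j) ∧ (∑ j, (y j - x j)) < Y x ω}.Finite} = 1 := by
  have hgsum : Summable (gseq μ) := summable_gseq hμ0pos hsum
  have htsum_g : ∑' m, ENNReal.ofReal (gseq μ m) ≠ ∞ := by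
    rw [← ENNReal.ofReal_tsum_of_nonneg (fun m => gseq_nonneg hμnonneg m) hgsum]
    exact ENNReal.ofReal_ne_top
  have htsum : ∑' y : Fin n → ℕ, P (U Y y) ≠ ∞ := by
    have hle : ∑' y : Fin n → ℕ, P (U Y y) ≤
        ENNReal.ofReal (F μ 0) * ((∑' m, ENNReal.ofReal (gseq μ m)) ^ n) := by
      calc ∑' y : Fin n → ℕ, P (U Y y)
          ≤ ∑' y : Fin n → ℕ, ENNReal.ofReal (F μ 0) * ∏ j, ENNReal.ofReal (gseq μ (y j)) :=
            ENNReal.tsum_le_tsum (fun y => measure_U_le hμnonneg hμsum hYm hYi hYd y)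
        _ = ENNReal.ofReal (F μ 0) * ∑' y : Fin n → ℕ, ∏ j, ENNReal.ofReal (gseq μ (y j)) :=
            ENNReal.tsum_mul_left
        _ = _ := by rw [tsum_prod_pow (fun m => ENNReal.ofReal (gseq μ m)) n]
    exact ne_top_of_le_ne_top
      (ENNReal.mul_ne_top ENNReal.ofReal_ne_top (ENNReal.pow_ne_top htsum_g)) hle
  have hBC := measure_limsup_cofinite_eq_zero (μ := P) (s := fun y : Fin n → ℕ => U Y y) htsum
  have hset : {ω | {y : Fin n → ℕ | ¬ ∃ x : Fin n → ℕ,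
      (∀ j, x j ≤ y j) ∧ (∑ j, (y j - x j)) < Y x ω}.Finite}
      = (limsup (fun y : Fin n → ℕ => U Y y) cofinite)ᶜ := by
    ext ω
    simp only [Set.mem_setOf_eq, Set.mem_compl_iff, mem_limsup_iff_frequently_mem,
      frequently_cofinite_iff_infinite, Set.not_infinite]
    have hyy : {y : Fin n → ℕ | ¬ ∃ x : Fin n → ℕ,
        (∀ j, x j ≤ y j) ∧ (∑ j, (y j - x j)) < Y x ω}
        = {y : Fin n → ℕ | ω ∈ U Y y} := by
      ext y
      simp only [Set.mem_setOf_eq, U, D]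
      push_neg
      rfl
    rw [hyy]
  rw [hset]
  set L := limsup (fun y : Fin n → ℕ => U Y y) cofinite with hL
  refine le_antisymm prob_le_one ?_
  calc (1:ℝ≥0∞) = P Set.univ := by rw [measure_univ]
    _ = P (Lᶜ ∪ L) := by rw [Set.compl_union_self]
    _ ≤ P Lᶜ + P L := measure_union_le _ _
    _ = P Lᶜ := by rw [hBC, add_zero]

end Conclude

end BP

/-- For Boolean percolation on the directed lattice `ℕ₀ⁿ`
(edges `(x, x + eⱼ)`, so a vertex `y` is covered iff there is `x ≤ y` coordinatewise
with `∑ⱼ (yⱼ - xⱼ) < Y x`), whether all but finitely many vertices are covered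
almost surely does not depend on the dimension `n`: if it holds for some `n ≥ 1`
(and some i.i.d. family with marginal `μ`), then it holds for every `n ≥ 1`
(and every i.i.d. family with marginal `μ`). -/
theorem boolean_percolation_Nn_finite_uncovered_dimension_independent
    (μ : ℕ → ℝ) (hμnonneg : ∀ n, 0 ≤ μ n) (hμsum : ∑' n, μ n = 1)
    (hμ0pos : 0 < μ 0) (hμ0lt : μ 0 < 1)
    (h : ∃ (n : ℕ), 1 ≤ n ∧ ∃ (Ω : Type) (_ : MeasurableSpace Ω) (P : Measure Ω),
      IsProbabilityMeasure P ∧ ∃ Y : (Fin n → ℕ) → Ω → ℕ,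
        (∀ x, Measurable (Y x)) ∧ iIndepFun Y P ∧
        (∀ x k, P {ω | Y x ω = k} = ENNReal.ofReal (μ k)) ∧
        P {ω | {y : Fin n → ℕ | ¬ ∃ x : Fin n → ℕ,
          (∀ j, x j ≤ y j) ∧ (∑ j, (y j - x j)) < Y x ω}.Finite} = 1) :
    ∀ (n : ℕ), 1 ≤ n → ∀ (Ω : Type) (_ : MeasurableSpace Ω) (P : Measure Ω),
      IsProbabilityMeasure P → ∀ Y : (Fin n → ℕ) → Ω → ℕ,
        (∀ x, Measurable (Y x)) → iIndepFun Y P →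
        (∀ x k, P {ω | Y x ω = k} = ENNReal.ofReal (μ k)) →
        P {ω | {y : Fin n → ℕ | ¬ ∃ x : Fin n → ℕ,
          (∀ j, x j ≤ y j) ∧ (∑ j, (y j - x j)) < Y x ω}.Finite} = 1 := by
  obtain ⟨n₀, hn₀, Ω₀, m₀, P₀, hP₀, Y₀, hYm₀, hYi₀, hYd₀, hfin₀⟩ := h
  have hsum : Summable (BP.pseq μ) := by
    letI := m₀
    haveI := hP₀
    exact BP.summable_pseq hμnonneg hμsum hn₀ hYm₀ hYi₀ hYd₀ hfin₀
  intro n hn Ω mΩ P hP Y hYm hYi hYd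
  letI := mΩ
  haveI := hP
  exact BP.conclusion_of_summable hμnonneg hμsum hμ0pos hsum hYm hYi hYd
end

section
/- Let (y_k)_{k≥0} be any sequence of nonnegative integers and define x₀ = y₀ and x_{n+1} = max(x_n − 1, y_{n+1}) for n ≥ 0. Then for every n ≥ 0 one has x_n = max_{0≤k≤n} (y_k − (n − k)), and consequently x_n > 0 if and only if there exists k ∈ {0,…,n} with y_k > n − k. In particular, coupling the random exchange process (X_n)_{n≥0} with the Boolean percolation model on ℕ₀ via the same i.i.d. sequence (Y_n)_{n≥0} yields V_μ(ℕ₀) = {n ∈ ℕ₀ : X_n > 0}. -/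
/-- For any sequence `(y k)` of nonnegative integers, the
random-exchange recursion `x 0 = y 0`, `x (n+1) = max (x n - 1) (y (n+1))`
satisfies `x n = max_{0 ≤ k ≤ n} (y k - (n - k))`; consequently `x n > 0` iff
`∃ k ≤ n, y k > n - k`. In particular, coupling the random exchange process with
Boolean percolation on `ℕ₀` via the same sequence yields
`V_μ(ℕ₀) = {n | X n > 0}`. -/
theorem random_exchange_coupling (y : ℕ → ℕ) (x : ℕ → ℕ)
    (hx0 : x 0 = y 0) (hxs : ∀ n : ℕ, x (n + 1) = max (x n - 1) (y (n + 1))) :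
    (∀ n : ℕ, (x n : ℤ) = Finset.sup' (Finset.range (n + 1))
        Finset.nonempty_range_add_one (fun k => (y k : ℤ) - ((n - k : ℕ) : ℤ))) ∧
      (∀ n : ℕ, 0 < x n ↔ ∃ k ≤ n, n - k < y k) ∧
      {n : ℕ | ∃ k ≤ n, n - k < y k} = {n : ℕ | 0 < x n} := by
  have main : ∀ n : ℕ, (x n : ℤ) = Finset.sup' (Finset.range (n + 1))
      Finset.nonempty_range_add_one (fun k => (y k : ℤ) - ((n - k : ℕ) : ℤ)) := by
    intro n
    induction n with
    | zero => simp [hx0]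
    | succ n ih =>
      have hsplit := Finset.sup'_congr (Finset.nonempty_range_add_one (n := n + 1))
        (Finset.range_add_one (n := n + 1))
        (fun k _ => rfl (a := (y k : ℤ) - ((n + 1 - k : ℕ) : ℤ)))
      rw [Finset.sup'_insert (H := Finset.nonempty_range_add_one)] at hsplit
      have hfg : ∀ k ∈ Finset.range (n + 1), (y k : ℤ) - ((n + 1 - k : ℕ) : ℤ) =
          ((fun t : ℤ => t - 1) ∘ fun k => (y k : ℤ) - ((n - k : ℕ) : ℤ)) k := by
        intro k hk
        have hk' : k ≤ n := Nat.lt_succ_iff.mp (Finset.mem_range.mp hk)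
        simp only [Function.comp]
        omega
      have hshift : Finset.sup' (Finset.range (n + 1)) Finset.nonempty_range_add_one
          (fun k => (y k : ℤ) - ((n + 1 - k : ℕ) : ℤ)) = (x n : ℤ) - 1 := by
        rw [Finset.sup'_congr Finset.nonempty_range_add_one rfl hfg,
          ← Finset.comp_sup'_eq_sup'_comp _ (fun t : ℤ => t - 1) (fun a b => by omega), ih]
      rw [hxs n, hsplit, hshift]
      omega
  have pos : ∀ n : ℕ, 0 < x n ↔ ∃ k ≤ n, n - k < y k := by
    intro n
    have h0 : (0 : ℤ) < (x n : ℤ) ↔ 0 < x n := by exact_mod_cast Iff.rfl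
    rw [← h0, main n, Finset.lt_sup'_iff]
    constructor
    · rintro ⟨k, hk, h⟩
      exact ⟨k, Nat.lt_succ_iff.mp (Finset.mem_range.mp hk), by omega⟩
    · rintro ⟨k, hk, h⟩
      exact ⟨k, Finset.mem_range.mpr (Nat.lt_succ_of_le hk), by omega⟩
  refine ⟨main, pos, ?_⟩
  ext n
  simp [pos n]
end

section
/- Let n ≥ 2 and let μ be a probability vector on ℕ₀ with μ₀ ∈ (0,1). Then in the Boolean percolation model on the infinite directed n-ary tree 𝒟_n, the set of uncovered vertices is infinite almost surely: #V_μ^c(𝒟_n) = ∞ almost surely. -/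
open MeasureTheory ProbabilityTheory
open scoped ENNReal
open MeasureTheory ProbabilityTheory
open scoped ENNReal
set_option linter.unusedSectionVars false
set_option maxHeartbeats 1000000

namespace BoolPercAux

variable {n : ℕ} {Ω : Type*} [MeasurableSpace Ω] {P : Measure Ω} [IsProbabilityMeasure P]
  {Y : List (Fin n) → Ω → ℕ} {μ : ℕ → ℝ}

lemma Mblk_le' : True := trivial

variable {n : ℕ} {Ω : Type*} [MeasurableSpace Ω] {P : Measure Ω} [IsProbabilityMeasure P]
  {Y : List (Fin n) → Ω → ℕ}

def Mblk (Y : List (Fin n) → Ω → ℕ) (S : Set (List (Fin n))) : MeasurableSpace Ω :=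
  ⨆ x ∈ S, MeasurableSpace.comap (Y x) inferInstance

lemma Mblk_mono {S T : Set (List (Fin n))} (h : S ⊆ T) : Mblk Y S ≤ Mblk Y T :=
  biSup_mono h

lemma meas_le_Mblk {x : List (Fin n)} {k : ℕ} {S : Set (List (Fin n))} (hx : x ∈ S) :
    MeasurableSet[Mblk Y S] {ω | Y x ω ≤ k} :=
  (le_iSup₂ (f := fun x _ => MeasurableSpace.comap (Y x) inferInstance) x hx) _
    ⟨Set.Iic k, trivial, rfl⟩

lemma meas_eq_Mblk {x : List (Fin n)} {k : ℕ} {S : Set (List (Fin n))} (hx : x ∈ S) :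
    MeasurableSet[Mblk Y S] {ω | Y x ω = k} :=
  (le_iSup₂ (f := fun x _ => MeasurableSpace.comap (Y x) inferInstance) x hx) _
    ⟨{k}, trivial, rfl⟩

/-- `Usets Y v d` : there is a "relatively uncovered" vertex at depth `d` below `v`. -/
def Usets (Y : List (Fin n) → Ω → ℕ) : List (Fin n) → ℕ → Set Ω
  | v, 0 => {ω | Y v ω = 0}
  | v, (d+1) => {ω | Y v ω ≤ d+1} ∩ ⋃ c : Fin n, Usets Y (v ++ [c]) d

lemma usets_meas (d : ℕ) : ∀ v : List (Fin n),
    MeasurableSet[Mblk Y {x | v <+: x}] (Usets Y v d) := by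
  induction d with
  | zero => exact fun v => meas_eq_Mblk (List.prefix_refl v)
  | succ d ih =>
    intro v
    refine MeasurableSet.inter (meas_le_Mblk (List.prefix_refl v)) ?_
    refine MeasurableSet.iUnion fun c => ?_
    have hsub : {x | v ++ [c] <+: x} ⊆ {x | v <+: x} := fun x hx =>
      ((v.prefix_append [c]).trans hx)
    exact Mblk_mono hsub _ (ih (v ++ [c]))

/-- From `Usets` membership, extract an uncovered witness word. -/
lemma usets_witness (d : ℕ) : ∀ (v : List (Fin n)) (ω : Ω), ω ∈ Usets Y v d →
    ∃ u : List (Fin n), u.length = d ∧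
      ∀ u₁ u₂ : List (Fin n), u₁ ++ u₂ = u → Y (v ++ u₁) ω + u₁.length ≤ d := by
  induction d with
  | zero =>
    intro v ω hω
    refine ⟨[], rfl, fun u₁ u₂ h => ?_⟩
    have h1 : u₁ = [] := by
      rcases List.append_eq_nil_iff.1 h with ⟨h1, _⟩; exact h1
    subst h1
    simpa using Nat.le_of_eq hω
  | succ d ih =>
    intro v ω hω
    obtain ⟨h1, h2⟩ := hω
    obtain ⟨c, hc⟩ := Set.mem_iUnion.1 h2
    obtain ⟨u, hu, hP⟩ := ih (v ++ [c]) ω hc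
    refine ⟨c :: u, by simp [hu], fun u₁ u₂ h => ?_⟩
    rcases u₁ with _ | ⟨c₁, u₁'⟩
    · simpa using h1
    · have hc₁ : c₁ = c := by injection h
      have hu' : u₁' ++ u₂ = u := by injection h
      have := hP u₁' u₂ hu'
      have hrw : v ++ (c₁ :: u₁') = (v ++ [c]) ++ u₁' := by rw [hc₁]; simp
      rw [hrw]
      simp only [List.length_cons]
      omega

lemma Mblk_le (hYmeas : ∀ x, Measurable (Y x)) (S : Set (List (Fin n))) :
    Mblk Y S ≤ ‹MeasurableSpace Ω› :=
  iSup₂_le fun x _ => (hYmeas x).comap_le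
lemma indep_blocks (hYmeas : ∀ x, Measurable (Y x))
    (hYindep : iIndepFun Y P)
    {S T : Set (List (Fin n))} (hST : Disjoint S T) {A B : Set Ω}
    (hA : MeasurableSet[Mblk Y S] A) (hB : MeasurableSet[Mblk Y T] B) :
    P (A ∩ B) = P A * P B := by
  have hi : iIndep (fun x => MeasurableSpace.comap (Y x) inferInstance) P :=
    (iIndepFun_iff_iIndep _ _ _).1 hYindep
  have h := indep_iSup_of_disjoint (fun x => (hYmeas x).comap_le) hi hST
  exact (Indep_iff _ _ _).1 h A B hA hB

lemma prod_blocks (hYmeas : ∀ x, Measurable (Y x))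
    (hYindep : iIndepFun Y P)
    {κ : Type*} (T : κ → Set (List (Fin n))) (A : κ → Set Ω)
    (s : Finset κ) (hd : ∀ i ∈ s, ∀ j ∈ s, i ≠ j → Disjoint (T i) (T j))
    (hA : ∀ j ∈ s, MeasurableSet[Mblk Y (T j)] (A j)) :
    P (⋂ j ∈ s, A j) = ∏ j ∈ s, P (A j) := by
  classical
  induction s using Finset.induction with
  | empty => simp
  | @insert a s ha ih =>
    rw [Finset.set_biInter_insert, Finset.prod_insert ha]
    have hdisj : Disjoint (T a) (⋃ j ∈ (s : Set κ), T j) := by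
      rw [Set.disjoint_iUnion_right]
      intro j
      rw [Set.disjoint_iUnion_right]
      intro hj
      exact hd a (Finset.mem_insert_self a s) j (Finset.mem_insert_of_mem hj)
        (fun h => ha (h ▸ hj))
    have hB : MeasurableSet[Mblk Y (⋃ j ∈ (s : Set κ), T j)] (⋂ j ∈ s, A j) := by
      refine Finset.measurableSet_biInter s fun j hj => ?_
      exact Mblk_mono (Set.subset_biUnion_of_mem (u := T) hj) _
        (hA j (Finset.mem_insert_of_mem hj))
    rw [indep_blocks hYmeas hYindep hdisj (hA a (Finset.mem_insert_self a s)) hB,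
      ih (fun i hi j hj hij => hd i (Finset.mem_insert_of_mem hi) j
        (Finset.mem_insert_of_mem hj) hij)
        (fun j hj => hA j (Finset.mem_insert_of_mem hj))]


lemma cdf_eq (hYmeas : ∀ x, Measurable (Y x))
    (hYdist : ∀ x k, P {ω | Y x ω = k} = ENNReal.ofReal (μ k))
    (hμnonneg : ∀ m, 0 ≤ μ m) (x : List (Fin n)) (k : ℕ) :
    P {ω | Y x ω ≤ k} = ENNReal.ofReal (∑ i ∈ Finset.range (k+1), μ i) := by
  have hset : {ω | Y x ω ≤ k} = ⋃ i ∈ Finset.range (k+1), {ω | Y x ω = i} := by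
    ext ω
    simp only [Set.mem_setOf_eq, Set.mem_iUnion, Finset.mem_range, Nat.lt_succ_iff]
    exact ⟨fun h => ⟨Y x ω, h, rfl⟩, fun ⟨i, hi, he⟩ => he ▸ hi⟩
  rw [hset, measure_biUnion_finset]
  · rw [ENNReal.ofReal_sum_of_nonneg (fun i _ => hμnonneg i)]
    exact Finset.sum_congr rfl fun i _ => hYdist x i
  · intro i _ j _ hij
    simp only [Function.onFun, Set.disjoint_left, Set.mem_setOf_eq]
    intro ω h1 h2
    exact hij (h1 ▸ h2 ▸ rfl)
  · intro i _
    exact hYmeas x (measurableSet_singleton i)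


lemma path_subset (z : Fin n) (d : ℕ) : ∀ v : List (Fin n),
    (⋂ i ∈ Finset.range (d+1), {ω | Y (v ++ List.replicate i z) ω = 0}) ⊆ Usets Y v d := by
  induction d with
  | zero =>
    intro v ω hω
    have := Set.mem_iInter₂.1 hω 0 (by simp)
    simpa [Usets] using this
  | succ d ih =>
    intro v ω hω
    have h0 : Y v ω = 0 := by
      have := Set.mem_iInter₂.1 hω 0 (by simp)
      simpa using this
    refine ⟨by simp [h0], Set.mem_iUnion.2 ⟨z, ih (v ++ [z]) ?_⟩⟩
    refine Set.mem_iInter₂.2 fun i hi => ?_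
    have := Set.mem_iInter₂.1 hω (i+1) (by simp at hi ⊢; omega)
    have hrw : v ++ List.replicate (i+1) z = (v ++ [z]) ++ List.replicate i z := by
      rw [List.replicate_succ]; simp
    rwa [hrw] at this

lemma path_le (hYmeas : ∀ x, Measurable (Y x))
    (hYindep : iIndepFun Y P)
    (hYdist : ∀ x k, P {ω | Y x ω = k} = ENNReal.ofReal (μ k))
    (hμ0 : 0 ≤ μ 0) (z : Fin n) (d : ℕ) (v : List (Fin n)) :
    ENNReal.ofReal (μ 0 ^ (d+1)) ≤ P (Usets Y v d) := by
  refine le_trans (le_of_eq ?_) (measure_mono (path_subset z d v))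
  have hprod := prod_blocks hYmeas hYindep
    (fun i : ℕ => {v ++ List.replicate i z})
    (fun i : ℕ => {ω | Y (v ++ List.replicate i z) ω = 0})
    (Finset.range (d+1))
    (by
      intro i _ j _ hij
      simp only [Set.disjoint_singleton_left, Set.mem_singleton_iff]
      intro h
      apply hij
      have := congrArg List.length h
      simpa using this)
    (fun j _ => meas_eq_Mblk rfl)
  rw [hprod]
  have : ∀ j ∈ Finset.range (d+1),
      P {ω | Y (v ++ List.replicate j z) ω = 0} = ENNReal.ofReal (μ 0) :=
    fun j _ => hYdist _ 0
  rw [Finset.prod_congr rfl this, Finset.prod_const, Finset.card_range,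
    ← ENNReal.ofReal_pow hμ0]

lemma usets_compl_bound (hn : 2 ≤ n)
    (hYmeas : ∀ x, Measurable (Y x))
    (hYindep : iIndepFun Y P)
    (hYdist : ∀ x k, P {ω | Y x ω = k} = ENNReal.ofReal (μ k))
    (hμnonneg : ∀ m, 0 ≤ μ m)
    (j₀ : ℕ) (hj₀ : ∀ k, j₀ ≤ k → (3/4 : ℝ) ≤ ∑ i ∈ Finset.range (k+1), μ i)
    (hFle1 : ∀ k, (∑ i ∈ Finset.range (k+1), μ i) ≤ 1)
    (b : ℝ) (hb : 1/2 ≤ b) (hb1 : b ≤ 1)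
    (hqpow : ∀ d, d ≤ j₀ → 1 - b ≤ μ 0 ^ (d+1)) :
    ∀ (d : ℕ) (v : List (Fin n)), P ((Usets Y v d)ᶜ) ≤ ENNReal.ofReal b := by
  have hz : 0 < n := by omega
  set z : Fin n := ⟨0, hz⟩ with hzdef
  -- the "small depth" bound via the all-zero path
  have hsmall : ∀ d, d ≤ j₀ → ∀ v : List (Fin n), P ((Usets Y v d)ᶜ) ≤ ENNReal.ofReal b := by
    intro d hd v
    have hmeas : MeasurableSet (Usets Y v d) := Mblk_le hYmeas _ _ (usets_meas d v)
    rw [prob_compl_eq_one_sub hmeas]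
    refine le_trans (tsub_le_tsub_left (path_le hYmeas hYindep hYdist (hμnonneg 0) z d v) 1) ?_
    rw [tsub_le_iff_right]
    have hbnn : (0:ℝ) ≤ b := by linarith
    have hpnn : (0:ℝ) ≤ μ 0 ^ (d+1) := pow_nonneg (hμnonneg 0) _
    calc (1:ℝ≥0∞) = ENNReal.ofReal (b + μ 0 ^ (d+1)) - ENNReal.ofReal (b + μ 0 ^ (d+1) - 1) := by
          rw [← ENNReal.ofReal_one, ← ENNReal.ofReal_sub _ (by have := hqpow d hd; linarith)]
          norm_num
      _ ≤ ENNReal.ofReal (b + μ 0 ^ (d+1)) := tsub_le_self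
      _ = ENNReal.ofReal b + ENNReal.ofReal (μ 0 ^ (d+1)) := ENNReal.ofReal_add hbnn hpnn
  intro d
  induction d with
  | zero => exact hsmall 0 (Nat.zero_le _)
  | succ d ih =>
    rcases le_or_gt (d+1) j₀ with hcase | hcase
    · exact hsmall (d+1) hcase
    · intro v
      set f : ℝ := ∑ i ∈ Finset.range (d+2), μ i with hfdef
      have hf34 : (3/4 : ℝ) ≤ f := hj₀ (d+1) (by omega)
      have hf1 : f ≤ 1 := hFle1 (d+1)
      set A : Set Ω := {ω | Y v ω ≤ d+1} with hAdef
      set NN : Fin n → Set Ω := fun c => (Usets Y (v ++ [c]) d)ᶜ with hNdef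
      -- complement inclusion
      have hincl : (Usets Y v (d+1))ᶜ ⊆ Aᶜ ∪ (A ∩ ⋂ c : Fin n, NN c) := by
        intro ω hω
        by_cases hA : ω ∈ A
        · refine Or.inr ⟨hA, Set.mem_iInter.2 fun c => ?_⟩
          intro hcon
          exact hω ⟨hA, Set.mem_iUnion.2 ⟨c, hcon⟩⟩
        · exact Or.inl hA
      have hPA : P A = ENNReal.ofReal f := cdf_eq hYmeas hYdist hμnonneg v (d+1)
      -- independence splitting
      have hsplit : P (A ∩ ⋂ c : Fin n, NN c) = P A * ∏ c : Fin n, P (NN c) := by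
        have h1 : P (A ∩ ⋂ c : Fin n, NN c) = P A * P (⋂ c : Fin n, NN c) := by
          refine indep_blocks hYmeas hYindep (S := {v})
            (T := {x | ∃ c : Fin n, v ++ [c] <+: x}) ?_ (meas_le_Mblk rfl) ?_
          · simp only [Set.disjoint_singleton_left, Set.mem_setOf_eq]
            rintro ⟨c, hc⟩
            have := hc.length_le
            simp at this
          · have : (⋂ c : Fin n, NN c) = ⋂ c ∈ (Finset.univ : Finset (Fin n)), NN c := by
              simp
            rw [this]
            refine Finset.measurableSet_biInter _ fun c _ => ?_
            refine MeasurableSet.compl ?_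
            exact Mblk_mono (show {x | v ++ [c] <+: x} ⊆ {x | ∃ c : Fin n, v ++ [c] <+: x}
              from fun x hx => ⟨c, hx⟩) _ (usets_meas d (v ++ [c]))
        have h2 : P (⋂ c : Fin n, NN c) = ∏ c : Fin n, P (NN c) := by
          have : (⋂ c : Fin n, NN c) = ⋂ c ∈ (Finset.univ : Finset (Fin n)), NN c := by simp
          rw [this]
          rw [prod_blocks hYmeas hYindep (fun c : Fin n => {x | v ++ [c] <+: x}) NN
            Finset.univ ?_ ?_]
          · intro i _ j _ hij
            simp only [Set.disjoint_left, Set.mem_setOf_eq]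
            intro x hx1 hx2
            apply hij
            have hlen : (v ++ [i]).length ≤ (v ++ [j]).length := by simp
            have := (List.prefix_of_prefix_length_le hx1 hx2 hlen).eq_of_length (by simp)
            have := List.append_inj_right this (by simp)
            simpa using this
          · exact fun c _ => MeasurableSet.compl (usets_meas d (v ++ [c]))
        rw [h1, h2]
      -- each factor bounded by b
      have hfac : ∏ c : Fin n, P (NN c) ≤ ENNReal.ofReal b ^ n := by
        refine le_trans (Finset.prod_le_pow_card _ _ _ fun c _ => ih (v ++ [c])) ?_
        simp
      have hpown : ENNReal.ofReal b ^ n ≤ ENNReal.ofReal b ^ 2 :=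
        pow_le_pow_of_le_one (by positivity) (ENNReal.ofReal_le_one.2 hb1) hn
      -- put together
      calc P ((Usets Y v (d+1))ᶜ) ≤ P (Aᶜ) + P (A ∩ ⋂ c : Fin n, NN c) :=
            le_trans (measure_mono hincl) (measure_union_le _ _)
        _ ≤ (1 - ENNReal.ofReal f) + ENNReal.ofReal f * ENNReal.ofReal b ^ 2 := by
            refine add_le_add ?_ ?_
            · have hAmeas : MeasurableSet A := hYmeas v measurableSet_Iic
              rw [prob_compl_eq_one_sub hAmeas, hPA]
            · rw [hsplit, hPA]
              exact mul_le_mul_right (le_trans hfac hpown) _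
        _ ≤ ENNReal.ofReal b := by
            have h1 : (1 : ℝ≥0∞) - ENNReal.ofReal f = ENNReal.ofReal (1 - f) := by
              rw [ENNReal.ofReal_sub _ (by linarith), ENNReal.ofReal_one]
            rw [h1, ← ENNReal.ofReal_pow (by linarith), ← ENNReal.ofReal_mul (by linarith),
              ← ENNReal.ofReal_add (by linarith) (by nlinarith)]
            refine ENNReal.ofReal_le_ofReal ?_
            have key : (0:ℝ) ≤ (1 - b) * (f * (1 + b) - 1) := by
              refine mul_nonneg (by linarith) ?_
              have h9 : (3/4 : ℝ) * (3/2) ≤ f * (1 + b) :=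
                mul_le_mul hf34 (by linarith) (by norm_num) (by linarith)
              linarith
            nlinarith [key]

end BoolPercAux

open BoolPercAux

/-- For Boolean percolation on the infinite directed `n`-ary
tree `𝒟ₙ` (`n ≥ 2`), whose vertices are the finite words over `{1,…,n}` and where
a vertex `y` is covered iff some prefix `x` of `y` satisfies
`d(x,y) = |y| - |x| < Y x`, the set of uncovered vertices is infinite almost
surely, for any radius law `μ`. -/
theorem boolean_percolation_tree_uncovered_infinite
    (n : ℕ) (hn : 2 ≤ n)
    (μ : ℕ → ℝ) (hμnonneg : ∀ m, 0 ≤ μ m) (hμsum : ∑' m, μ m = 1)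
    (hμ0pos : 0 < μ 0) (hμ0lt : μ 0 < 1)
    (Ω : Type*) [MeasurableSpace Ω] (P : Measure Ω) [IsProbabilityMeasure P]
    (Y : List (Fin n) → Ω → ℕ) (hYmeas : ∀ x, Measurable (Y x))
    (hYindep : iIndepFun Y P)
    (hYdist : ∀ x k, P {ω | Y x ω = k} = ENNReal.ofReal (μ k)) :
    P {ω | {y : List (Fin n) |
        ¬ ∃ x : List (Fin n), x <+: y ∧ y.length - x.length < Y x ω}.Infinite} = 1 := by
  classical
  -- Basic facts about the partial sums F
  have hsummable : Summable μ := by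
    by_contra h
    rw [tsum_eq_zero_of_not_summable h] at hμsum
    norm_num at hμsum
  set F : ℕ → ℝ := fun k => ∑ i ∈ Finset.range (k+1), μ i with hFdef
  have hFmono : Monotone F := fun a c hac => Finset.sum_le_sum_of_subset_of_nonneg
      (Finset.range_subset_range.2 (by omega)) (fun i _ _ => hμnonneg i)
  have hFnonneg : ∀ k, 0 ≤ F k := fun k => Finset.sum_nonneg fun i _ => hμnonneg i
  have hFle1 : ∀ k, F k ≤ 1 := by
    intro k
    rw [← hμsum]
    exact Summable.sum_le_tsum _ (fun i _ => hμnonneg i) hsummable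
  have hFtend : Filter.Tendsto F Filter.atTop (nhds 1) := by
    have h0 := hsummable.hasSum
    rw [hμsum] at h0
    exact h0.tendsto_sum_nat.comp (Filter.tendsto_add_atTop_nat 1)
  have hFnear : ∀ η : ℝ, 0 < η → ∃ d, 1 - η ≤ F d := by
    intro η hη
    obtain ⟨d, hd⟩ := (hFtend.eventually (eventually_gt_nhds (show 1 - η < 1 by linarith))).exists
    exact ⟨d, le_of_lt hd⟩
  obtain ⟨j₀, hj₀'⟩ := hFnear (1/4) (by norm_num)
  have hj₀ : ∀ k, j₀ ≤ k → (3/4:ℝ) ≤ F k := fun k hk => by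
    have := hFmono hk; linarith
  -- the quantities q, b, B
  set q : ℝ := min (μ 0 ^ (j₀+1)) (1/2) with hqdef
  have hq0 : 0 < q := lt_min (pow_pos hμ0pos _) (by norm_num)
  have hqhalf : q ≤ 1/2 := min_le_right _ _
  set b : ℝ := 1 - q with hbdef
  have hb : 1/2 ≤ b := by simp only [hbdef]; linarith
  have hb1 : b ≤ 1 := by simp only [hbdef]; linarith
  have hblt1 : b < 1 := by simp only [hbdef]; linarith
  have hqpow : ∀ d, d ≤ j₀ → 1 - b ≤ μ 0 ^ (d+1) := by
    intro d hd
    have h1 : μ 0 ^ (j₀+1) ≤ μ 0 ^ (d+1) :=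
      pow_le_pow_of_le_one (le_of_lt hμ0pos) (le_of_lt hμ0lt) (by omega)
    have h2 : 1 - b = q := by simp [hbdef]
    rw [h2]
    exact le_trans (min_le_left _ _) h1
  have hU := usets_compl_bound hn hYmeas hYindep hYdist hμnonneg j₀ hj₀ hFle1 b hb hb1 hqpow
  set B : ℝ≥0∞ := ENNReal.ofReal b with hBdef
  have hBlt1 : B < 1 := ENNReal.ofReal_lt_one.2 hblt1
  -- special vertices
  have h0n : 0 < n := by omega
  have h1n : 1 < n := by omega
  set z : Fin n := ⟨0, h0n⟩ with hzdef
  set o : Fin n := ⟨1, h1n⟩ with hodef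
  have hzo : z ≠ o := by simp [hzdef, hodef, Fin.ext_iff]
  set v : ℕ → List (Fin n) := fun j => List.replicate j z ++ [o] with hvdef
  have hvlen : ∀ j, (v j).length = j + 1 := by intro j; simp [hvdef]
  have hvinj : ∀ i j : ℕ, v i <+: v j → i = j := by
    intro i j h
    by_contra hij
    have hlen : i + 1 ≤ j + 1 := by
      have := h.length_le; rw [hvlen, hvlen] at this; exact this
    have hilt : i < j := by omega
    have hii : i < (v i).length := by rw [hvlen]; omega
    have hgi : (v i)[i]'hii = (v j)[i]'(by rw [hvlen]; omega) := h.getElem hii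
    have hl : (v i)[i]'hii = o := by
      simp only [hvdef]
      rw [List.getElem_concat_length (by simp)]
    have hr : (v j)[i]'(by rw [hvlen]; omega) = z := by
      simp only [hvdef]
      rw [List.getElem_append_left (by simp [hilt]), List.getElem_replicate]
    rw [hl, hr] at hgi
    exact hzo hgi.symm
  have hvdisj : ∀ i j : ℕ, i ≠ j → Disjoint {x | v i <+: x} {x | v j <+: x} := by
    intro i j hij
    rw [Set.disjoint_left]
    intro x hx1 hx2
    rcases List.prefix_or_prefix_of_prefix hx1 hx2 with h | h
    · exact hij (hvinj _ _ h)
    · exact hij (hvinj _ _ h).symm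
  -- uncovered events
  set E : List (Fin n) → Set Ω := fun y =>
    {ω | ∀ x : List (Fin n), x <+: y → Y x ω ≤ y.length - x.length} with hEdef
  have hEmeas : ∀ y, MeasurableSet (E y) := by
    intro y
    have h1 : E y = ⋂ (x : List (Fin n)) (_ : x <+: y),
        {ω | Y x ω ≤ y.length - x.length} := by
      ext ω; simp [hEdef]
    rw [h1]
    exact MeasurableSet.iInter fun x => MeasurableSet.iInter fun _ =>
      hYmeas x measurableSet_Iic
  set A : ℕ → Set Ω := fun m => ⋂ (y : List (Fin n)) (_ : m ≤ y.length), (E y)ᶜ with hAdef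
  -- the key step : P (A m) = 0
  have hAzero : ∀ m, P (A m) = 0 := by
    intro m
    have key : ∀ δ : ℝ, 0 < δ → P (A m) ≤ ENNReal.ofReal δ := by
      intro δ hδ
      have hch : ∀ j : ℕ, ∃ d : ℕ, 1 - δ / ((j+1 : ℝ) * 2^(j+1)) ≤ F d := by
        intro j
        refine hFnear _ (by positivity)
      choose dep hdep using hch
      set U : ℕ → Set Ω := fun j => Usets Y (v j) (dep j) with hUdef
      set G : ℕ → Set Ω := fun j =>
        ⋂ i ∈ Finset.range (j+1), {ω | Y (List.replicate i z) ω ≤ dep j} with hGdef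
      -- the inclusion
      have hincl : ∀ j, m ≤ j → A m ⊆ (U j)ᶜ ∪ (G j)ᶜ := by
        intro j hmj ω hω
        by_contra hc
        simp only [Set.mem_union, Set.mem_compl_iff, not_or, not_not] at hc
        obtain ⟨hUω, hGω⟩ := hc
        obtain ⟨u, hulen, hwit⟩ := usets_witness (dep j) (v j) ω hUω
        set y : List (Fin n) := v j ++ u with hydef
        have hylen : y.length = (j+1) + dep j := by
          simp [hydef, hvlen, hulen]
        have hym : m ≤ y.length := by omega
        have hyE : ω ∈ E y := by
          intro x hx
          rcases le_or_gt x.length j with hxs | hxs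
          · have hrp : List.replicate j z <+: y := by
              refine List.IsPrefix.trans ?_ (List.prefix_append _ _)
              simp [hvdef]
            have hxp : x <+: List.replicate j z :=
              List.prefix_of_prefix_length_le hx hrp (by simp [hxs])
            have hxr : x = List.replicate x.length z := by
              refine List.eq_replicate_iff.2 ⟨rfl, fun c hc => ?_⟩
              exact List.eq_of_mem_replicate (hxp.subset hc)
            have hgx := Set.mem_iInter₂.1 hGω x.length (Finset.mem_range.2 (by omega))
            rw [← hxr] at hgx
            simp only [Set.mem_setOf_eq] at hgx
            omega
          · have hvx : v j <+: x :=
              List.prefix_of_prefix_length_le (List.prefix_append _ _) hx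
                (by rw [hvlen]; omega)
            obtain ⟨u₁, hu₁⟩ := hvx
            have hu₁p : u₁ <+: u := by
              have h2 : v j ++ u₁ <+: v j ++ u := hu₁ ▸ hx
              exact (List.prefix_append_right_inj _).1 h2
            obtain ⟨u₂, hu₂⟩ := hu₁p
            have hwx := hwit u₁ u₂ hu₂
            have hxlen : x.length = (j+1) + u₁.length := by
              rw [← hu₁]; simp [hvlen]
            rw [hu₁] at hwx
            omega
        exact (Set.mem_iInter₂.1 hω y hym) hyE
      -- the bound on the spine events
      have hGb : ∀ j : ℕ, P ((G j)ᶜ) ≤ ENNReal.ofReal (δ / 2^(j+1)) := by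
        intro j
        have hcompl : (G j)ᶜ =
            ⋃ i ∈ Finset.range (j+1), {ω | Y (List.replicate i z) ω ≤ dep j}ᶜ := by
          simp [hGdef, Set.compl_iInter]
        rw [hcompl]
        refine le_trans (measure_biUnion_finset_le _ _) ?_
        have hone : ∀ i ∈ Finset.range (j+1),
            P ({ω | Y (List.replicate i z) ω ≤ dep j}ᶜ) ≤
              ENNReal.ofReal (δ / ((j+1 : ℝ) * 2^(j+1))) := by
          intro i _
          have hms : MeasurableSet {ω | Y (List.replicate i z) ω ≤ dep j} :=
            hYmeas _ measurableSet_Iic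
          rw [prob_compl_eq_one_sub hms,
            cdf_eq hYmeas hYdist hμnonneg (List.replicate i z) (dep j)]
          rw [tsub_le_iff_right]
          set η : ℝ := δ / ((j+1 : ℝ) * 2^(j+1)) with hηdef
          have hηpos : 0 < η := by positivity
          have hη := hdep j
          calc (1:ℝ≥0∞) = ENNReal.ofReal 1 := ENNReal.ofReal_one.symm
            _ ≤ ENNReal.ofReal (η + F (dep j)) :=
                ENNReal.ofReal_le_ofReal (by linarith)
            _ = ENNReal.ofReal η + ENNReal.ofReal (F (dep j)) :=
                ENNReal.ofReal_add (le_of_lt hηpos) (hFnonneg _)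
        refine le_trans (Finset.sum_le_sum hone) ?_
        rw [Finset.sum_const, Finset.card_range, nsmul_eq_mul]
        have hcast : ((j+1 : ℕ) : ℝ≥0∞) = ENNReal.ofReal ((j+1 : ℕ) : ℝ) :=
          (ENNReal.ofReal_natCast _).symm
        rw [hcast, ← ENNReal.ofReal_mul (by positivity)]
        refine ENNReal.ofReal_le_ofReal (le_of_eq ?_)
        push_cast
        have h2 : ((j:ℝ)+1) ≠ 0 := by positivity
        field_simp
      -- the quantitative bound
      have hKb : ∀ K : ℕ, P (A m) ≤ B ^ (K+1) + ENNReal.ofReal δ := by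
        intro K
        set S : Finset ℕ := Finset.Icc m (m+K) with hSdef
        have hcard : S.card = K+1 := by rw [hSdef, Nat.card_Icc]; omega
        have hsub2 : A m ⊆ (⋂ j ∈ S, (U j)ᶜ) ∪ ⋃ j ∈ S, (G j)ᶜ := by
          intro ω hω
          by_cases hg : ∃ j ∈ S, ω ∈ (G j)ᶜ
          · obtain ⟨j, hj, hgj⟩ := hg
            exact Or.inr (Set.mem_biUnion hj hgj)
          · push_neg at hg
            refine Or.inl (Set.mem_iInter₂.2 fun j hj => ?_)
            have hmj : m ≤ j := (Finset.mem_Icc.1 hj).1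
            rcases hincl j hmj hω with h | h
            · exact h
            · exact absurd h (hg j hj)
        have hprodbd : P (⋂ j ∈ S, (U j)ᶜ) ≤ B ^ (K+1) := by
          rw [prod_blocks hYmeas hYindep (fun j => {x | v j <+: x}) (fun j => (U j)ᶜ) S
            (fun i _ j _ hij => hvdisj i j hij)
            (fun j _ => MeasurableSet.compl (usets_meas (dep j) (v j)))]
          refine le_trans (Finset.prod_le_pow_card _ _ B fun j _ => hU (dep j) (v j)) ?_
          rw [hcard]
        have hsumbd : P (⋃ j ∈ S, (G j)ᶜ) ≤ ENNReal.ofReal δ := by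
          refine le_trans (measure_biUnion_finset_le _ _) ?_
          refine le_trans (Finset.sum_le_sum fun j _ => hGb j) ?_
          rw [← ENNReal.ofReal_sum_of_nonneg (fun j _ => div_nonneg hδ.le (by positivity))]
          refine ENNReal.ofReal_le_ofReal ?_
          have hss : S ⊆ Finset.range (m+K+1) := by
            intro x hx
            simp only [hSdef, Finset.mem_Icc] at hx
            simp only [Finset.mem_range]
            omega
          refine le_trans (Finset.sum_le_sum_of_subset_of_nonneg hss
            (fun i _ _ => div_nonneg hδ.le (by positivity))) ?_
          have hterm : ∀ i : ℕ, δ / 2^(i+1) = (δ/2) * (1/2)^i := by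
            intro i
            rw [div_eq_mul_inv, div_eq_mul_inv, one_div, inv_pow, pow_succ]
            ring
          calc ∑ i ∈ Finset.range (m+K+1), δ / 2^(i+1)
              = (δ/2) * ∑ i ∈ Finset.range (m+K+1), (1/2:ℝ)^i := by
                rw [Finset.mul_sum]
                exact Finset.sum_congr rfl fun i _ => hterm i
            _ ≤ (δ/2) * 2 :=
                mul_le_mul_of_nonneg_left (sum_geometric_two_le _) (by positivity)
            _ = δ := by ring
        calc P (A m) ≤ P (⋂ j ∈ S, (U j)ᶜ) + P (⋃ j ∈ S, (G j)ᶜ) :=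
              le_trans (measure_mono hsub2) (measure_union_le _ _)
          _ ≤ B ^ (K+1) + ENNReal.ofReal δ := add_le_add hprodbd hsumbd
      -- take the limit K → ∞
      have hlim : Filter.Tendsto (fun K : ℕ => B ^ (K+1) + ENNReal.ofReal δ)
          Filter.atTop (nhds (ENNReal.ofReal δ)) := by
        have h1 : Filter.Tendsto (fun K : ℕ => B ^ (K+1)) Filter.atTop (nhds 0) :=
          (ENNReal.tendsto_pow_atTop_nhds_zero_of_lt_one hBlt1).comp
            (Filter.tendsto_add_atTop_nat 1)
        have h2 := h1.add (tendsto_const_nhds :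
          Filter.Tendsto (fun _ : ℕ => ENNReal.ofReal δ) Filter.atTop (nhds (ENNReal.ofReal δ)))
        simpa using h2
      exact ge_of_tendsto' hlim hKb
    -- conclude P (A m) = 0
    by_contra hne
    have ht : 0 < (P (A m)).toReal :=
      ENNReal.toReal_pos hne (measure_ne_top _ _)
    have hk := key ((P (A m)).toReal / 2) (by linarith)
    have hlt : ENNReal.ofReal ((P (A m)).toReal / 2) < P (A m) := by
      rw [ENNReal.ofReal_lt_iff_lt_toReal (by linarith) (measure_ne_top _ _)]
      linarith
    exact absurd hk (not_le.2 hlt)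
  -- assemble
  have hPU : P (⋃ m, A m) = 0 := measure_iUnion_null hAzero
  have hAmeas : MeasurableSet (⋃ m, A m) :=
    MeasurableSet.iUnion fun m => MeasurableSet.iInter fun y =>
      MeasurableSet.iInter fun _ => (hEmeas y).compl
  have hsub : (⋃ m, A m)ᶜ ⊆ {ω | {y : List (Fin n) |
      ¬ ∃ x : List (Fin n), x <+: y ∧ y.length - x.length < Y x ω}.Infinite} := by
    intro ω hω
    simp only [Set.mem_compl_iff, Set.mem_iUnion, not_exists] at hω
    have hmem : ∀ m, ∃ y : List (Fin n), m ≤ y.length ∧ ω ∈ E y := by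
      intro m
      have h1 := hω m
      simp only [hAdef, Set.mem_iInter, not_forall] at h1
      obtain ⟨y, hy, h2⟩ := h1
      exact ⟨y, hy, not_not.1 h2⟩
    show Set.Infinite _
    have hWE : ∀ y : List (Fin n),
        y ∈ {y : List (Fin n) | ¬ ∃ x : List (Fin n), x <+: y ∧
          y.length - x.length < Y x ω} ↔ ω ∈ E y := by
      intro y
      simp only [Set.mem_setOf_eq, not_exists, not_and, not_lt, hEdef]
    by_contra hfin
    rw [Set.not_infinite] at hfin
    have hbdd : BddAbove (List.length ''
        {y : List (Fin n) | ¬ ∃ x : List (Fin n), x <+: y ∧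
          y.length - x.length < Y x ω}) :=
      (hfin.image _).bddAbove
    obtain ⟨M, hM⟩ := hbdd
    obtain ⟨y, hy1, hy2⟩ := hmem (M+1)
    have hyW : y ∈ {y : List (Fin n) | ¬ ∃ x : List (Fin n), x <+: y ∧
        y.length - x.length < Y x ω} := (hWE y).2 hy2
    have := hM (Set.mem_image_of_mem _ hyW)
    omega
  have h1 : P ((⋃ m, A m)ᶜ) = 1 := by
    rw [measure_compl hAmeas (measure_ne_top _ _), measure_univ, hPU, tsub_zero]
  exact le_antisymm prob_le_one (h1 ▸ measure_mono hsub)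
end
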